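/- arXiv:1301.6796 — 7 statements merged into one kernel-verified Lean document; each statement's English description precedes it below -/
import Mathlib

section
/- For a permutation p of length k with doubling number t, no alternating permutation of length less than k + t contains p. -/
def IsAlternating {n : ℕ} (w : Equiv.Perm (Fin n)) : Prop :=
  ∀ (i : ℕ) (h : i + 1 < n),
    if i % 2 = 0 then w ⟨i, by omega⟩ < w ⟨i + 1, h⟩
    else w ⟨i + 1, h⟩ < w ⟨i, by omega⟩

def ContainsPat {n b : ℕ} (w : Equiv.Perm (Fin n)) (q : Equiv.Perm (Fin b)) : Prop :=
  ∃ f : Fin b → Fin n, StrictMono f ∧ ∀ i j : Fin b, q i < q j ↔ w (f i) < w (f j)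

/-- The `j`-th entry (1-indexed) of the permutation `w`, as a value in `1..k`,
with the convention that the 0-th entry is `k+1` (playing the role of `+∞`). -/
def entryVal {k : ℕ} (w : Equiv.Perm (Fin k)) (j : ℕ) : ℕ :=
  if j = 0 then k + 1 else if h : j - 1 < k then (w ⟨j - 1, h⟩).val + 1 else 0

/-- The doubling set `d(p) = { i ∈ [k-1] : p(i-1) > p(i) > p(i+1) or p(i-1) < p(i) < p(i+1) }`,
with `p(0) = +∞`. -/
def doublingSet {k : ℕ} (w : Equiv.Perm (Fin k)) : Finset ℕ :=
  (Finset.Ico 1 k).filter fun i =>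
    (entryVal w (i - 1) > entryVal w i ∧ entryVal w i > entryVal w (i + 1)) ∨
    (entryVal w (i - 1) < entryVal w i ∧ entryVal w i < entryVal w (i + 1))

def doublingNumber {k : ℕ} (w : Equiv.Perm (Fin k)) : ℕ := (doublingSet w).card

/-- Position (shifted by one) of the `m`-th (1-indexed) entry of the occurrence. -/
def Xf {k n : ℕ} (f : Fin k → Fin n) (m : ℕ) : ℕ :=
  if h : m - 1 < k then (f ⟨m - 1, h⟩).val + 1 else 0

/-- The parity credit. -/
def chi {k n : ℕ} (p : Equiv.Perm (Fin k)) (f : Fin k → Fin n) (m : ℕ) : ℕ :=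
  if (Xf f m % 2 = 0 ↔ entryVal p m < entryVal p (m - 1)) then 1 else 0

lemma entryVal_zero {k : ℕ} (p : Equiv.Perm (Fin k)) : entryVal p 0 = k + 1 := by
  simp [entryVal]

lemma entryVal_pos {k : ℕ} (p : Equiv.Perm (Fin k)) (m : ℕ) (h1 : 1 ≤ m) (h : m - 1 < k) :
    entryVal p m = (p ⟨m - 1, h⟩).val + 1 := by
  unfold entryVal
  rw [if_neg (by omega), dif_pos h]

lemma entryVal_succ {k : ℕ} (p : Equiv.Perm (Fin k)) (m : ℕ) (h : m < k) :
    entryVal p (m + 1) = (p ⟨m, h⟩).val + 1 :=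
  entryVal_pos p (m + 1) (by omega) (by omega)

theorem stmt1 (k : ℕ) (p : Equiv.Perm (Fin k)) (n : ℕ) (w : Equiv.Perm (Fin n))
    (hw : IsAlternating w) (hn : n < k + doublingNumber p) :
    ¬ ContainsPat w p := by
  rintro ⟨f, hf, hpat⟩
  by_cases hk0 : k = 0
  · subst hk0
    have ht : doublingNumber p = 0 := by
      simp [doublingNumber, doublingSet]
    omega
  have hk1 : 1 ≤ k := by omega
  -- basic facts about Xf
  have hXval : ∀ (m : ℕ) (h1 : 1 ≤ m) (h : m - 1 < k),
      Xf f m = (f ⟨m - 1, h⟩).val + 1 := by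
    intro m h1 h
    unfold Xf
    rw [dif_pos h]
  have hXval' : ∀ (m : ℕ) (h : m < k), Xf f (m + 1) = (f ⟨m, h⟩).val + 1 := by
    intro m h
    exact hXval (m + 1) (by omega) (by omega)
  have hmono : ∀ m, 1 ≤ m → m < k → Xf f m < Xf f (m + 1) := by
    intro m h1 h2
    rw [hXval m h1 (by omega), hXval' m h2]
    have hlt : f ⟨m - 1, by omega⟩ < f ⟨m, h2⟩ := by
      apply hf
      rw [Fin.lt_def]
      simp only
      omega
    rw [Fin.lt_def] at hlt
    omega
  -- membership in the doubling set
  have hdub : ∀ m, m ∈ doublingSet p → (1 ≤ m ∧ m < k) ∧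
      ((entryVal p m < entryVal p (m - 1)) ↔ (entryVal p (m + 1) < entryVal p m)) := by
    intro m hm
    rw [doublingSet, Finset.mem_filter, Finset.mem_Ico] at hm
    obtain ⟨⟨h1, h2⟩, hcond⟩ := hm
    refine ⟨⟨h1, h2⟩, ?_⟩
    rcases hcond with ⟨a, b⟩ | ⟨a, b⟩ <;> constructor <;> intro <;> omega
  -- relation between pattern comparisons and w comparisons
  have hQw : ∀ (m : ℕ) (h1 : 1 ≤ m) (h2 : m < k),
      (entryVal p (m + 1) < entryVal p m ↔ w (f ⟨m, h2⟩) < w (f ⟨m - 1, by omega⟩)) := by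
    intro m h1 h2
    have hm1k : m - 1 < k := by omega
    rw [entryVal_succ p m h2, entryVal_pos p m h1 hm1k]
    have hp := hpat ⟨m, h2⟩ ⟨m - 1, hm1k⟩
    rw [Fin.lt_def] at hp
    constructor
    · intro hlt
      exact hp.mp (by omega)
    · intro hlt
      have := hp.mpr hlt
      omega
  -- the key parity fact for gap-1 steps
  have hF2 : ∀ (m : ℕ) (h1 : 1 ≤ m) (h2 : m < k), Xf f (m + 1) = Xf f m + 1 →
      (Xf f m % 2 = 0 ↔ entryVal p (m + 1) < entryVal p m) := by
    intro m h1 h2 hEq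
    have hm1k : m - 1 < k := by omega
    have hA : Xf f m = (f ⟨m - 1, hm1k⟩).val + 1 := hXval m h1 hm1k
    have hB : Xf f (m + 1) = (f ⟨m, h2⟩).val + 1 := hXval' m h2
    have hieq : (f ⟨m, h2⟩).val = (f ⟨m - 1, hm1k⟩).val + 1 := by omega
    have hin : (f ⟨m - 1, hm1k⟩).val + 1 < n := by
      rw [← hieq]; exact (f ⟨m, h2⟩).isLt
    have halt := hw ((f ⟨m - 1, hm1k⟩).val) hin
    have hQ := hQw m h1 h2
    have e1 : (⟨(f ⟨m - 1, hm1k⟩).val, by omega⟩ : Fin n) = f ⟨m - 1, hm1k⟩ := rfl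
    have e2 : (⟨(f ⟨m - 1, hm1k⟩).val + 1, hin⟩ : Fin n) = f ⟨m, h2⟩ := by
      apply Fin.ext
      exact hieq.symm
    rw [e1, e2] at halt
    by_cases hpar : (f ⟨m - 1, hm1k⟩).val % 2 = 0
    · rw [if_pos hpar] at halt
      have hnq : ¬ entryVal p (m + 1) < entryVal p m := by
        rw [hQ]
        exact fun hlt => lt_asymm halt hlt
      constructor
      · intro hx; exfalso; omega
      · intro hx; exact absurd hx hnq
    · rw [if_neg hpar] at halt
      have hq : entryVal p (m + 1) < entryVal p m := hQ.mpr halt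
      exact ⟨fun _ => hq, fun _ => by omega⟩
  have hchile : ∀ j, chi p f j ≤ 1 := by
    intro j
    unfold chi
    split <;> omega
  -- main induction
  have key : ∀ m : ℕ, 1 ≤ m → m ≤ k →
      m + ((doublingSet p).filter (· < m)).card + chi p f m ≤ Xf f m := by
    intro m
    induction m with
    | zero => intro h1 _; omega
    | succ m ih =>
      intro _ hmk1
      rcases Nat.eq_zero_or_pos m with rfl | hm1
      · -- base case m+1 = 1
        simp only [Nat.zero_add]
        have hfe : (doublingSet p).filter (· < 1) = ∅ := by
          rw [Finset.filter_eq_empty_iff]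
          intro x hx
          have := (hdub x hx).1.1
          omega
        rw [hfe]
        have hX1 : Xf f 1 = (f ⟨0, by omega⟩).val + 1 := hXval 1 le_rfl (by omega)
        have hlt : entryVal p 1 < entryVal p 0 := by
          rw [entryVal_zero, entryVal_succ p 0 hk1]
          have := (p ⟨0, hk1⟩).isLt
          omega
        unfold chi
        simp only [Nat.sub_self]
        split_ifs with hiff
        · have hpar : Xf f 1 % 2 = 0 := hiff.mpr hlt
          simp only [Finset.card_empty]
          omega
        · simp only [Finset.card_empty]
          omega
      · have hmk : m < k := by omega
        have IH := ih hm1 (by omega)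
        have hg := hmono m hm1 hmk
        -- chi at m+1 vanishes on gap-1 steps
        have hchiB0 : Xf f (m + 1) = Xf f m + 1 → chi p f (m + 1) = 0 := by
          intro hEq
          have h2 := hF2 m hm1 hmk hEq
          have hneg : ¬ (Xf f (m + 1) % 2 = 0 ↔ entryVal p (m + 1) < entryVal p m) := by
            intro hiff
            by_cases hq : entryVal p (m + 1) < entryVal p m
            · have ha := h2.mpr hq
              have hb := hiff.mpr hq
              omega
            · have h3 : Xf f m % 2 ≠ 0 := fun h => hq (h2.mp h)
              have h4 : Xf f (m + 1) % 2 ≠ 0 := fun h => hq (hiff.mp h)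
              omega
          unfold chi
          simp only [Nat.add_sub_cancel]
          rw [if_neg hneg]
        -- chi at m equals 1 on doubling gap-1 steps
        have hchiA1 : Xf f (m + 1) = Xf f m + 1 →
            ((entryVal p m < entryVal p (m - 1)) ↔ (entryVal p (m + 1) < entryVal p m)) →
            chi p f m = 1 := by
          intro hEq hdir
          have h2 := hF2 m hm1 hmk hEq
          unfold chi
          rw [if_pos (h2.trans hdir.symm)]
        -- chi is preserved on doubling gap-2 steps
        have hchiEq : Xf f (m + 1) = Xf f m + 2 →
            ((entryVal p m < entryVal p (m - 1)) ↔ (entryVal p (m + 1) < entryVal p m)) →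
            chi p f (m + 1) = chi p f m := by
          intro hEq hdir
          have hpar : Xf f (m + 1) % 2 = 0 ↔ Xf f m % 2 = 0 := by omega
          unfold chi
          simp only [Nat.add_sub_cancel]
          have hq1 : (Xf f (m + 1) % 2 = 0 ↔ entryVal p (m + 1) < entryVal p m) ↔
              (Xf f m % 2 = 0 ↔ entryVal p m < entryVal p (m - 1)) := by
            constructor
            · intro h
              exact ⟨fun hp' => hdir.mpr (h.mp (hpar.mpr hp')),
                fun hq => hpar.mp (h.mpr (hdir.mp hq))⟩
            · intro h
              exact ⟨fun hp' => hdir.mp (h.mp (hpar.mp hp')),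
                fun hq => hpar.mpr (h.mpr (hdir.mpr hq))⟩
          rw [if_congr hq1 rfl rfl]
        -- counting the doubling set
        have hTstep : ((doublingSet p).filter (· < (m + 1))).card =
            ((doublingSet p).filter (· < m)).card + (if m ∈ doublingSet p then 1 else 0) := by
          by_cases hm : m ∈ doublingSet p
          · rw [if_pos hm]
            have hins : (doublingSet p).filter (· < (m + 1)) =
                insert m ((doublingSet p).filter (· < m)) := by
              ext x
              simp only [Finset.mem_filter, Finset.mem_insert]
              constructor
              · rintro ⟨hx, hlt⟩
                rcases Nat.lt_succ_iff_lt_or_eq.mp hlt with h | h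
                · exact Or.inr ⟨hx, h⟩
                · exact Or.inl h
              · rintro (rfl | ⟨hx, hlt⟩)
                · exact ⟨hm, by omega⟩
                · exact ⟨hx, by omega⟩
            rw [hins, Finset.card_insert_of_notMem (by simp)]
          · rw [if_neg hm]
            have : (doublingSet p).filter (· < (m + 1)) = (doublingSet p).filter (· < m) := by
              ext x
              simp only [Finset.mem_filter]
              constructor
              · rintro ⟨hx, hlt⟩
                have hxm : x ≠ m := fun h => hm (h ▸ hx)
                exact ⟨hx, by omega⟩
              · rintro ⟨hx, hlt⟩
                exact ⟨hx, by omega⟩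
            rw [this]
            omega
        by_cases hmS : m ∈ doublingSet p
        · obtain ⟨_, hdir⟩ := hdub m hmS
          rw [hTstep, if_pos hmS]
          rcases (by omega : Xf f (m + 1) = Xf f m + 1 ∨ Xf f (m + 1) = Xf f m + 2 ∨
              Xf f m + 3 ≤ Xf f (m + 1)) with h | h | h
          · have c1 := hchiB0 h
            have c2 := hchiA1 h hdir
            omega
          · have c1 := hchiEq h hdir
            omega
          · have c1 := hchile (m + 1)
            omega
        · rw [hTstep, if_neg hmS]
          rcases (by omega : Xf f (m + 1) = Xf f m + 1 ∨ Xf f m + 2 ≤ Xf f (m + 1)) with h | h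
          · have c1 := hchiB0 h
            omega
          · have c1 := hchile (m + 1)
            omega
  -- conclude
  have hfin := key k hk1 le_rfl
  have hfull : (doublingSet p).filter (· < k) = doublingSet p := by
    apply Finset.filter_true_of_mem
    intro x hx
    exact (hdub x hx).1.2
  rw [hfull] at hfin
  have hk1k : k - 1 < k := by omega
  have hXk : Xf f k = (f ⟨k - 1, hk1k⟩).val + 1 := hXval k hk1 hk1k
  have hlast := (f ⟨k - 1, hk1k⟩).isLt
  unfold doublingNumber at hn
  omega
end

section
/- Suppose patterns p of length k and q of length k' have doubling numbers t and t' respectively, with ceil((k+t)/2) ≠ ceil((k'+t')/2). Then there exists an even n such that the number of alternating permutations of length n avoiding p differs from the number avoiding q. -/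
namespace AltPat

variable {k : ℕ} (p : Equiv.Perm (Fin k))

lemma entryVal_zero : entryVal p 0 = k + 1 := by simp [entryVal]

lemma entryVal_of_pos {i : ℕ} (h1 : 1 ≤ i) (h2 : i ≤ k) :
    entryVal p i = (p ⟨i - 1, by omega⟩).val + 1 := by
  unfold entryVal
  rw [if_neg (by omega), dif_pos (by omega)]

lemma entryVal_le {i : ℕ} (h1 : 1 ≤ i) (h2 : i ≤ k) : entryVal p i ≤ k := by
  rw [entryVal_of_pos p h1 h2]
  have := (p ⟨i - 1, by omega⟩).isLt
  omega

lemma entryVal_pos {i : ℕ} (h1 : 1 ≤ i) (h2 : i ≤ k) : 1 ≤ entryVal p i := by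
  rw [entryVal_of_pos p h1 h2]; omega

lemma entryVal_lt_iff {i j : ℕ} (h1 : 1 ≤ i) (h2 : i ≤ k) (h1' : 1 ≤ j) (h2' : j ≤ k) :
    entryVal p i < entryVal p j ↔ p ⟨i - 1, by omega⟩ < p ⟨j - 1, by omega⟩ := by
  rw [entryVal_of_pos p h1 h2, entryVal_of_pos p h1' h2', Fin.lt_def]
  omega

lemma entryVal_inj {i j : ℕ} (h1 : 1 ≤ i) (h2 : i ≤ k) (h1' : 1 ≤ j) (h2' : j ≤ k)
    (h : entryVal p i = entryVal p j) : i = j := by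
  rw [entryVal_of_pos p h1 h2, entryVal_of_pos p h1' h2'] at h
  have hv : (p ⟨i-1, by omega⟩ : Fin k) = p ⟨j-1, by omega⟩ := Fin.val_injective (by omega)
  have := Fin.mk.inj_iff.mp (p.injective hv)
  omega

/-- step `i` (between entries `i` and `i+1`, 1-indexed entries; `i = 0` uses `p(0)=∞`) is a descent -/
def down (i : ℕ) : Prop := entryVal p (i + 1) < entryVal p i

lemma down_succ_pred {i : ℕ} (h1 : 1 ≤ i) : down p (i - 1) ↔ entryVal p i < entryVal p (i - 1) := by
  unfold down
  rw [show i - 1 + 1 = i from by omega]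

lemma down_zero (hk : 1 ≤ k) : down p 0 := by
  have := entryVal_le p (le_refl 1) hk
  unfold down
  rw [show (0:ℕ) + 1 = 1 from rfl, entryVal_zero]
  omega

lemma not_down_iff {i : ℕ} (hi : i + 1 ≤ k) : ¬ down p i ↔ entryVal p i < entryVal p (i + 1) := by
  unfold down
  rcases Nat.eq_zero_or_pos i with h0 | h0
  · subst h0
    have h1 := entryVal_le p (le_refl 1) hi
    rw [show (0:ℕ) + 1 = 1 from rfl, entryVal_zero]
    omega
  · have hne : entryVal p (i+1) ≠ entryVal p i := fun h =>
      by have := entryVal_inj p (by omega) hi (by omega) (by omega) h; omega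
    omega

lemma mem_doublingSet_iff {i : ℕ} :
    i ∈ doublingSet p ↔ 1 ≤ i ∧ i < k ∧ ((down p (i-1) ∧ down p i) ∨ (¬ down p (i-1) ∧ ¬ down p i)) := by
  unfold doublingSet
  rw [Finset.mem_filter, Finset.mem_Ico]
  constructor
  · rintro ⟨⟨h1, h2⟩, h3⟩
    refine ⟨h1, h2, ?_⟩
    have hAB : entryVal p (i-1) ≠ entryVal p i := by
      rcases Nat.eq_or_lt_of_le h1 with h | h
      · have := entryVal_le p (le_refl 1) (by omega)
        rw [← h]
        simp only [Nat.sub_self, entryVal_zero]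
        omega
      · exact fun hE => by have := entryVal_inj p (by omega) (by omega) h1 (by omega) hE; omega
    have hBC : entryVal p i ≠ entryVal p (i+1) := fun hE =>
      by have := entryVal_inj p h1 (by omega) (by omega) (by omega) hE; omega
    rw [down_succ_pred p h1]
    unfold down
    omega
  · rintro ⟨h1, h2, h3⟩
    refine ⟨⟨h1, h2⟩, ?_⟩
    have hAB : entryVal p (i-1) ≠ entryVal p i := by
      rcases Nat.eq_or_lt_of_le h1 with h | h
      · have := entryVal_le p (le_refl 1) (by omega)
        rw [← h]
        simp only [Nat.sub_self, entryVal_zero]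
        omega
      · exact fun hE => by have := entryVal_inj p (by omega) (by omega) h1 (by omega) hE; omega
    have hBC : entryVal p i ≠ entryVal p (i+1) := fun hE =>
      by have := entryVal_inj p h1 (by omega) (by omega) (by omega) hE; omega
    rw [down_succ_pred p h1] at h3
    unfold down at h3
    omega

lemma mem_doublingSet_iff' {i : ℕ} (h1 : 1 ≤ i) (h2 : i < k) :
    i ∈ doublingSet p ↔ (down p i ↔ down p (i-1)) := by
  rw [mem_doublingSet_iff]
  constructor
  · rintro ⟨-, -, h⟩
    tauto
  · intro h
    refine ⟨h1, h2, ?_⟩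
    tauto

def cfun (i : ℕ) : ℕ := ((doublingSet p).filter (· ≤ i)).card

def mfun (i : ℕ) : ℕ := (i - 1) + cfun p (i - 1)

lemma cfun_zero : cfun p 0 = 0 := by
  unfold cfun
  rw [Finset.card_eq_zero, Finset.filter_eq_empty_iff]
  intro x hx
  rw [mem_doublingSet_iff] at hx
  omega

lemma cfun_succ (i : ℕ) : cfun p (i + 1) = cfun p i + (if (i+1) ∈ doublingSet p then 1 else 0) := by
  unfold cfun
  have : (doublingSet p).filter (· ≤ i + 1) =
      (doublingSet p).filter (· ≤ i) ∪ (doublingSet p).filter (· = i + 1) := by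
    rw [← Finset.filter_or]
    apply Finset.filter_congr
    intro x _
    constructor
    · intro h; rcases Nat.lt_or_ge x (i+1) with h' | h'
      · exact Or.inl (by omega)
      · exact Or.inr (by omega)
    · intro h; rcases h with h | h <;> omega
  rw [this, Finset.card_union_of_disjoint]
  · congr 1
    rw [Finset.filter_eq']
    split <;> simp [*]
  · rw [Finset.disjoint_left]
    intro x hx hx'
    simp only [Finset.mem_filter] at hx hx'
    omega

lemma cfun_top : cfun p (k - 1) = doublingNumber p := by
  unfold cfun doublingNumber
  congr 1
  apply Finset.filter_true_of_mem
  intro x hx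
  rw [mem_doublingSet_iff] at hx
  omega

lemma mfun_one : mfun p 1 = 0 := by simp [mfun, cfun_zero]

lemma mfun_succ (i : ℕ) (h1 : 1 ≤ i) :
    mfun p (i + 1) = mfun p i + (if i ∈ doublingSet p then 2 else 1) := by
  unfold mfun
  simp only [Nat.add_sub_cancel]
  obtain ⟨j, rfl⟩ : ∃ j, i = j + 1 := ⟨i - 1, by omega⟩
  rw [cfun_succ]
  simp only [Nat.add_sub_cancel]
  split <;> omega

lemma mfun_strict_mono {i j : ℕ} (h1 : 1 ≤ i) (hij : i < j) : mfun p i + (j - i) ≤ mfun p j := by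
  induction j with
  | zero => omega
  | succ n ih =>
    rcases Nat.lt_or_ge i n with h | h
    · have := ih (by omega)
      rw [mfun_succ p n (by omega)]
      split <;> omega
    · have : i = n := by omega
      subst this
      rw [mfun_succ p i (by omega)]
      split <;> omega

lemma mfun_k (hk : 1 ≤ k) : mfun p k = k - 1 + doublingNumber p := by
  unfold mfun
  rw [cfun_top]

end AltPat
namespace AltPat

lemma alt_desc {n : ℕ} {w : Equiv.Perm (Fin n)} (hw : IsAlternating w) {a b : ℕ}
    (hab : a < b) (hb : b < n) (h : w ⟨b, hb⟩ < w ⟨a, by omega⟩) :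
    ∃ r, a ≤ r ∧ r < b ∧ r % 2 = 1 := by
  rcases Nat.lt_or_ge (a + 1) b with h2 | h2
  · rcases Nat.even_or_odd a with he | ho
    · exact ⟨a + 1, by omega, by omega, by rcases he with ⟨c, hc⟩; omega⟩
    · exact ⟨a, le_refl a, by omega, by rcases ho with ⟨c, hc⟩; omega⟩
  · have hb' : b = a + 1 := by omega
    subst hb'
    have := hw a hb
    by_cases hpar : a % 2 = 0
    · rw [if_pos hpar] at this
      exact absurd h (asymm this)
    · exact ⟨a, le_refl a, by omega, by omega⟩

lemma alt_asc {n : ℕ} {w : Equiv.Perm (Fin n)} (hw : IsAlternating w) {a b : ℕ}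
    (hab : a < b) (hb : b < n) (h : w ⟨a, by omega⟩ < w ⟨b, hb⟩) :
    ∃ r, a ≤ r ∧ r < b ∧ r % 2 = 0 := by
  rcases Nat.lt_or_ge (a + 1) b with h2 | h2
  · rcases Nat.even_or_odd a with he | ho
    · exact ⟨a, le_refl a, by omega, by rcases he with ⟨c, hc⟩; omega⟩
    · exact ⟨a + 1, by omega, by omega, by rcases ho with ⟨c, hc⟩; omega⟩
  · have hb' : b = a + 1 := by omega
    subst hb'
    have := hw a hb
    by_cases hpar : a % 2 = 0
    · exact ⟨a, le_refl a, by omega, hpar⟩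
    · rw [if_neg hpar] at this
      exact absurd h (asymm this)

lemma doublingNumber_zero_of_k_zero (p : Equiv.Perm (Fin 0)) : doublingNumber p = 0 := by
  unfold doublingNumber
  rw [Finset.card_eq_zero, Finset.eq_empty_iff_forall_notMem]
  intro x hx
  rw [mem_doublingSet_iff] at hx
  omega

/-- Lower bound: any alternating permutation containing `p` has length at least `k + t`. -/
lemma lower_bound {n k : ℕ} (w : Equiv.Perm (Fin n)) (p : Equiv.Perm (Fin k))
    (hw : IsAlternating w) (hc : ContainsPat w p) : k + doublingNumber p ≤ n := by
  rcases Nat.eq_zero_or_pos k with hk | hk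
  · subst hk
    rw [doublingNumber_zero_of_k_zero p]
    omega
  obtain ⟨f, hmono, hpat⟩ := hc
  set F : ℕ → ℕ := fun i => if h : i - 1 < k then (f ⟨i - 1, h⟩).val else 0 with hF
  have hFdef : ∀ i, 1 ≤ i → i ≤ k → ∀ (hh : i - 1 < k), F i = (f ⟨i - 1, hh⟩).val := by
    intro i h1 h2 hh
    rw [hF]
    simp only [dif_pos (by omega : i - 1 < k)]
  have hFlt : ∀ i, 1 ≤ i → i ≤ k → F i < n := by
    intro i h1 h2
    rw [hFdef i h1 h2 (by omega)]
    exact (f ⟨i - 1, by omega⟩).isLt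
  have hFmono : ∀ i, 1 ≤ i → i + 1 ≤ k → F i < F (i + 1) := by
    intro i h1 h2
    rw [hFdef i h1 (by omega) (by omega), hFdef (i+1) (by omega) h2 (by omega)]
    have hlt : (⟨i - 1, by omega⟩ : Fin k) < ⟨i + 1 - 1, by omega⟩ := by
      rw [Fin.mk_lt_mk]
      omega
    exact hmono hlt
  have hstep : ∀ i, 1 ≤ i → i + 1 ≤ k →
      (down p i → ∃ r, F i ≤ r ∧ r < F (i+1) ∧ r % 2 = 1) ∧
      (¬ down p i → ∃ r, F i ≤ r ∧ r < F (i+1) ∧ r % 2 = 0) := by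
    intro i h1 h2
    constructor
    · intro hd
      unfold down at hd
      rw [entryVal_lt_iff p (by omega) h2 h1 (by omega), hpat] at hd
      refine alt_desc hw (hFmono i h1 h2) (hFlt (i+1) (by omega) h2) ?_
      convert hd using 2
      · exact Fin.ext (hFdef (i+1) (by omega) h2 (by omega))
      · exact Fin.ext (hFdef i h1 (by omega) (by omega))
    · intro hd
      rw [not_down_iff p h2] at hd
      rw [entryVal_lt_iff p h1 (by omega) (by omega) h2, hpat] at hd
      refine alt_asc hw (hFmono i h1 h2) (hFlt (i+1) (by omega) h2) ?_
      convert hd using 2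
      · exact Fin.ext (hFdef i h1 (by omega) (by omega))
      · exact Fin.ext (hFdef (i+1) (by omega) h2 (by omega))
  have main : ∀ i, 1 ≤ i → i ≤ k → mfun p i ≤ F i ∧
      (F i = mfun p i → 2 ≤ i →
        ((down p (i-1) → F i % 2 = 0) ∧ (¬ down p (i-1) → F i % 2 = 1))) := by
    intro i h1
    induction i, h1 using Nat.le_induction with
    | base =>
      intro _
      refine ⟨by rw [mfun_one]; omega, ?_⟩
      intro _ h
      omega
    | succ i hi ih =>
      intro h2
      obtain ⟨ihle, ihpar⟩ := ih (by omega)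
      have hmono := hFmono i hi h2
      have hms := mfun_succ p i hi
      simp only [Nat.add_sub_cancel]
      by_cases hd : i ∈ doublingSet p
      · rw [if_pos hd] at hms
        have hsame := (mem_doublingSet_iff' p hi (by omega)).mp hd
        by_cases hcase : mfun p i + 1 ≤ F i
        · constructor
          · omega
          · intro hEq _
            constructor
            · intro hdn
              obtain ⟨r, hr1, hr2, hr3⟩ := (hstep i hi h2).1 hdn
              omega
            · intro hup
              obtain ⟨r, hr1, hr2, hr3⟩ := (hstep i hi h2).2 hup
              omega
        · have hFi : F i = mfun p i := by omega
          rcases Nat.lt_or_ge i 2 with hi1 | hi2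
          · have h1eq : i = 1 := by omega
            subst h1eq
            have hdn : down p 1 := by
              have h0 : down p 0 := down_zero p (by omega)
              rw [show (1:ℕ) - 1 = 0 from rfl] at hsame
              exact hsame.mpr h0
            obtain ⟨r, hr1, hr2, hr3⟩ := (hstep 1 (by norm_num) h2).1 hdn
            have hm1 : mfun p 1 = 0 := mfun_one p
            constructor
            · omega
            · intro hEq _
              constructor
              · intro _
                omega
              · intro hup
                exact absurd hdn hup
          · have hpar := ihpar hFi hi2
            by_cases hdn : down p i
            · have hdn' : down p (i-1) := hsame.mp hdn
              have hFieven := hpar.1 hdn'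
              obtain ⟨r, hr1, hr2, hr3⟩ := (hstep i hi h2).1 hdn
              constructor
              · omega
              · intro hEq _
                constructor
                · intro _
                  omega
                · intro hup'
                  exact absurd hdn hup'
            · have hup' : ¬ down p (i-1) := fun hc => hdn (hsame.mpr hc)
              have hFiodd := hpar.2 hup'
              obtain ⟨r, hr1, hr2, hr3⟩ := (hstep i hi h2).2 hdn
              constructor
              · omega
              · intro hEq _
                constructor
                · intro hdc
                  exact absurd hdc hdn
                · intro _
                  omega
      · rw [if_neg hd] at hms
        constructor
        · omega
        · intro hEq _
          by_cases hdn : down p i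
          · obtain ⟨r, hr1, hr2, hr3⟩ := (hstep i hi h2).1 hdn
            constructor
            · intro _
              omega
            · intro hup'
              exact absurd hdn hup'
          · obtain ⟨r, hr1, hr2, hr3⟩ := (hstep i hi h2).2 hdn
            constructor
            · intro hdc
              exact absurd hdc hdn
            · intro _
              omega
  have hfin := (main k (by omega) (le_refl k)).1
  have hlt := hFlt k (by omega) (le_refl k)
  have hmk := mfun_k p (by omega)
  omega

end AltPat
namespace AltPat

variable {k : ℕ} (p : Equiv.Perm (Fin k))

def Vv (i : ℕ) : ℤ := (4*(k:ℤ)+4) * (entryVal p i)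

def fillerVal (i : ℕ) : ℤ :=
  if entryVal p (i+1) < entryVal p i then Vv p i + i else Vv p i - i

def PADv (k : ℕ) : ℤ := (4*(k:ℤ)+4) * ((k:ℤ)+2)

open Classical in
noncomputable def valfun (j : ℕ) : ℤ :=
  if hj : ∃ i, 1 ≤ i ∧ i ≤ k ∧ mfun p i = j then Vv p hj.choose
  else if hf : ∃ i, i ∈ doublingSet p ∧ mfun p i + 1 = j then fillerVal p hf.choose
  else PADv k

lemma Vv_lt {a b : ℕ} (h : entryVal p a < entryVal p b) : Vv p a + (2*(k:ℤ)+2) ≤ Vv p b := by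
  unfold Vv
  have h1 : (entryVal p a : ℤ) + 1 ≤ (entryVal p b : ℤ) := by exact_mod_cast h
  have hk0 : (0:ℤ) ≤ (k:ℤ) := Int.natCast_nonneg k
  nlinarith [mul_le_mul_of_nonneg_left h1 (show (0:ℤ) ≤ 4*(k:ℤ)+4 by positivity)]

lemma Vv_inj {a b : ℕ} (h : Vv p a = Vv p b) : entryVal p a = entryVal p b := by
  unfold Vv at h
  have := mul_left_cancel₀ (show (4*(k:ℤ)+4) ≠ 0 by positivity) h
  exact_mod_cast this

lemma Vv_le (i : ℕ) (h1 : 1 ≤ i) (h2 : i ≤ k) : Vv p i ≤ (4*(k:ℤ)+4) * k := by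
  unfold Vv
  have := entryVal_le p h1 h2
  have h3 : (entryVal p i : ℤ) ≤ (k : ℤ) := by exact_mod_cast this
  have hk0 : (0:ℤ) ≤ (k:ℤ) := Int.natCast_nonneg k
  nlinarith

lemma Vv_pos (i : ℕ) (h1 : 1 ≤ i) (h2 : i ≤ k) : (4*(k:ℤ)+4) ≤ Vv p i := by
  unfold Vv
  have := entryVal_pos p h1 h2
  have h3 : (1:ℤ) ≤ (entryVal p i : ℤ) := by exact_mod_cast this
  nlinarith [Int.natCast_nonneg k]

lemma m_inj {a b : ℕ} (h1 : 1 ≤ a) (h2 : a ≤ k) (h1' : 1 ≤ b) (h2' : b ≤ k)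
    (h : mfun p a = mfun p b) : a = b := by
  rcases lt_trichotomy a b with hlt | he | hlt
  · have := mfun_strict_mono p h1 hlt
    omega
  · exact he
  · have := mfun_strict_mono p h1' hlt
    omega

lemma d_bounds {i : ℕ} (h : i ∈ doublingSet p) : 1 ≤ i ∧ i < k :=
  ⟨((mem_doublingSet_iff p).mp h).1, ((mem_doublingSet_iff p).mp h).2.1⟩

lemma val_m {i : ℕ} (h1 : 1 ≤ i) (h2 : i ≤ k) : valfun p (mfun p i) = Vv p i := by
  unfold valfun
  have hex : ∃ i', 1 ≤ i' ∧ i' ≤ k ∧ mfun p i' = mfun p i := ⟨i, h1, h2, rfl⟩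
  rw [dif_pos hex]
  obtain ⟨a1, a2, a3⟩ := hex.choose_spec
  rw [m_inj p a1 a2 h1 h2 a3]

lemma val_filler {i : ℕ} (hd : i ∈ doublingSet p) : valfun p (mfun p i + 1) = fillerVal p i := by
  obtain ⟨h1, h2⟩ := d_bounds p hd
  have hstep : mfun p (i+1) = mfun p i + 2 := by
    rw [mfun_succ p i h1, if_pos hd]
  unfold valfun
  have hnot : ¬ ∃ i', 1 ≤ i' ∧ i' ≤ k ∧ mfun p i' = mfun p i + 1 := by
    rintro ⟨i', b1, b2, b3⟩
    rcases Nat.lt_or_ge i' (i+1) with hc | hc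
    · rcases Nat.eq_or_lt_of_le (by omega : i' ≤ i) with he | hlt
      · rw [he] at b3
        omega
      · have := mfun_strict_mono p b1 hlt
        omega
    · rcases Nat.eq_or_lt_of_le hc with he | hlt
      · rw [← he] at b3
        omega
      · have := mfun_strict_mono p (by omega : 1 ≤ i + 1) hlt
        omega
  rw [dif_neg hnot]
  have hex : ∃ i', i' ∈ doublingSet p ∧ mfun p i' + 1 = mfun p i + 1 := ⟨i, hd, rfl⟩
  rw [dif_pos hex]
  obtain ⟨a1, a2⟩ := hex.choose_spec
  obtain ⟨c1, c2⟩ := d_bounds p a1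
  rw [m_inj p c1 (by omega) h1 (by omega) (by omega)]

lemma val_pad {j : ℕ} (hk : 1 ≤ k) (hj : mfun p k < j) : valfun p j = PADv k := by
  unfold valfun
  have hnot : ¬ ∃ i', 1 ≤ i' ∧ i' ≤ k ∧ mfun p i' = j := by
    rintro ⟨i', b1, b2, b3⟩
    rcases Nat.eq_or_lt_of_le b2 with he | hlt
    · rw [he] at b3
      omega
    · have := mfun_strict_mono p b1 hlt
      omega
  rw [dif_neg hnot]
  have hnot2 : ¬ ∃ i', i' ∈ doublingSet p ∧ mfun p i' + 1 = j := by
    rintro ⟨i', b1, b2⟩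
    obtain ⟨c1, c2⟩ := d_bounds p b1
    have hstep : mfun p (i'+1) = mfun p i' + 2 := by
      rw [mfun_succ p i' c1, if_pos b1]
    rcases Nat.eq_or_lt_of_le (by omega : i' + 1 ≤ k) with he | hlt
    · rw [he] at hstep
      omega
    · have := mfun_strict_mono p (by omega : 1 ≤ i'+1) hlt
      omega
  rw [dif_neg hnot2]

lemma coverage (hk : 1 ≤ k) : ∀ j, j ≤ mfun p k →
    ∃ i, 1 ≤ i ∧ i ≤ k ∧ (mfun p i = j ∨ (i ∈ doublingSet p ∧ mfun p i + 1 = j)) := by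
  intro j
  induction j with
  | zero => exact fun _ => ⟨1, le_refl 1, hk, Or.inl (mfun_one p)⟩
  | succ j ih =>
    intro hj
    obtain ⟨i, h1, h2, hcase⟩ := ih (by omega)
    rcases hcase with hm | ⟨hd, hm⟩
    · by_cases hdd : i ∈ doublingSet p
      · exact ⟨i, h1, h2, Or.inr ⟨hdd, by omega⟩⟩
      · rcases Nat.lt_or_ge i k with hik | hik
        · refine ⟨i+1, by omega, by omega, Or.inl ?_⟩
          rw [mfun_succ p i h1, if_neg hdd]
          omega
        · have hik' : i = k := by omega
          subst hik'
          omega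
    · obtain ⟨c1, c2⟩ := d_bounds p hd
      refine ⟨i+1, by omega, by omega, Or.inl ?_⟩
      rw [mfun_succ p i h1, if_pos hd]
      omega

lemma m_parity : ∀ i, 2 ≤ i → i ≤ k →
    ((down p (i-1) → mfun p i % 2 = 0) ∧ (¬ down p (i-1) → mfun p i % 2 = 1)) := by
  intro i h2
  induction i, h2 using Nat.le_induction with
  | base =>
    intro hk2
    have hm1 := mfun_one p
    have hms := mfun_succ p 1 (le_refl 1)
    norm_num at hms
    have hiff := mem_doublingSet_iff' p (le_refl 1) (by omega)
    have h0 : down p 0 := down_zero p (by omega)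
    simp only [show (2:ℕ) - 1 = 1 from rfl]
    simp only [show (1:ℕ) - 1 = 0 from rfl] at hiff
    constructor
    · intro hdn
      have hmem : 1 ∈ doublingSet p := hiff.mpr (iff_of_true hdn h0)
      rw [if_pos hmem] at hms
      omega
    · intro hdn
      have hmem : 1 ∉ doublingSet p := fun hmem => hdn ((hiff.mp hmem).mpr h0)
      rw [if_neg hmem] at hms
      omega
  | succ i hi ih =>
    intro hik
    obtain ⟨ih1, ih2⟩ := ih (by omega)
    have hms := mfun_succ p i (by omega)
    have hiff := mem_doublingSet_iff' p (i := i) (by omega) (by omega)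
    simp only [Nat.add_sub_cancel]
    by_cases hdn : down p i <;> by_cases hdn' : down p (i-1)
    · have hmem : i ∈ doublingSet p := hiff.mpr (iff_of_true hdn hdn')
      rw [if_pos hmem] at hms
      have := ih1 hdn'
      exact ⟨fun _ => by omega, fun h => absurd hdn h⟩
    · have hmem : i ∉ doublingSet p := fun hmem => hdn' ((hiff.mp hmem).mp hdn)
      rw [if_neg hmem] at hms
      have := ih2 hdn'
      exact ⟨fun _ => by omega, fun h => absurd hdn h⟩
    · have hmem : i ∉ doublingSet p := fun hmem => hdn ((hiff.mp hmem).mpr hdn')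
      rw [if_neg hmem] at hms
      have := ih1 hdn'
      exact ⟨fun h => absurd h hdn, fun _ => by omega⟩
    · have hmem : i ∈ doublingSet p := hiff.mpr (iff_of_false hdn hdn')
      rw [if_pos hmem] at hms
      have := ih2 hdn'
      exact ⟨fun h => absurd h hdn, fun _ => by omega⟩

lemma perm_of_val {N : ℕ} (v : Fin N → ℤ) (hinj : Function.Injective v) :
    ∃ w : Equiv.Perm (Fin N), ∀ a b, w a < w b ↔ v a < v b := by
  classical
  let s := Finset.univ.image v
  have hcard : s.card = N := by
    rw [Finset.card_image_of_injective _ hinj, Finset.card_univ, Fintype.card_fin]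
  let e := s.orderIsoOfFin hcard
  let g : Fin N → Fin N := fun j => e.symm ⟨v j, Finset.mem_image_of_mem v (Finset.mem_univ j)⟩
  have hg : ∀ a b, g a < g b ↔ v a < v b := by
    intro a b
    simp only [g]
    rw [OrderIso.lt_iff_lt]
    exact Iff.rfl
  have ginj : Function.Injective g := by
    intro a b hab
    rcases lt_trichotomy (v a) (v b) with h | h | h
    · exact absurd hab (ne_of_lt ((hg a b).mpr h))
    · exact hinj h
    · exact absurd hab.symm (ne_of_lt ((hg b a).mpr h))
  have gbij := Finite.injective_iff_bijective.mp ginj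
  exact ⟨Equiv.ofBijective g gbij, fun a b => hg a b⟩

end AltPat
namespace AltPat

lemma upper_bound {k : ℕ} (p : Equiv.Perm (Fin k)) :
    ∃ w : Equiv.Perm (Fin (2*((k + doublingNumber p + 1)/2))), IsAlternating w ∧ ContainsPat w p := by
  rcases Nat.eq_zero_or_pos k with hk | hk
  · subst hk
    refine ⟨Equiv.refl _, ?_, ?_⟩
    · intro i hlt
      exfalso
      rw [doublingNumber_zero_of_k_zero p] at hlt
      omega
    · exact ⟨fun i => Fin.elim0 i, fun a b hab => a.elim0, fun i j => i.elim0⟩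
  · set t := doublingNumber p with hT
    set N := 2*((k + t + 1)/2) with hN
    have hTm : mfun p k = k - 1 + t := mfun_k p hk
    have hN1 : mfun p k + 1 ≤ N := by omega
    have hN2 : N ≤ mfun p k + 2 := by omega
    have hNeven : N % 2 = 0 := by omega
    have hk0 : (0:ℤ) ≤ (k:ℤ) := Int.natCast_nonneg k
    have hk1 : (1:ℤ) ≤ (k:ℤ) := by exact_mod_cast hk
    -- alternation of the value sequence
    have hvalt : ∀ j, j + 1 < N →
        (j % 2 = 0 → valfun p j < valfun p (j+1)) ∧
        (j % 2 = 1 → valfun p (j+1) < valfun p j) := by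
      intro j hj
      have hjT : j ≤ mfun p k := by omega
      obtain ⟨i, h1, h2, hcase⟩ := coverage p hk j hjT
      rcases hcase with hm | ⟨hd, hm⟩
      · by_cases hdd : i ∈ doublingSet p
        · obtain ⟨c1, c2⟩ := d_bounds p hdd
          have hv1 : valfun p j = Vv p i := by rw [← hm]; exact val_m p h1 h2
          have hv2 : valfun p (j+1) = fillerVal p i := by rw [← hm]; exact val_filler p hdd
          have hsame := (mem_doublingSet_iff' p c1 c2).mp hdd
          have hiz : (1:ℤ) ≤ (i:ℤ) := by exact_mod_cast c1
          by_cases hdn : down p i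
          · have hpar : j % 2 = 0 := by
              rcases Nat.eq_or_lt_of_le c1 with he | hgt
              · rw [← hm, ← he, mfun_one p]
              · have := (m_parity p i (by omega) h2).1 (hsame.mp hdn)
                omega
            refine ⟨fun _ => ?_, fun hodd => absurd hodd (by omega)⟩
            rw [hv1, hv2]
            unfold fillerVal
            rw [if_pos (show entryVal p (i+1) < entryVal p i from hdn)]
            linarith
          · have hi2 : 2 ≤ i := by
              rcases Nat.eq_or_lt_of_le c1 with he | hgt
              · exfalso
                rw [← he] at hsame hdn
                simp only [show (1:ℕ)-1 = 0 from rfl] at hsame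
                exact hdn (hsame.mpr (down_zero p hk))
              · omega
            have hpar : j % 2 = 1 := by
              have hnd' : ¬ down p (i-1) := fun hc => hdn (hsame.mpr hc)
              have := (m_parity p i hi2 h2).2 hnd'
              omega
            refine ⟨fun heven => absurd heven (by omega), fun _ => ?_⟩
            rw [hv1, hv2]
            unfold fillerVal
            rw [if_neg (show ¬ entryVal p (i+1) < entryVal p i from hdn)]
            linarith
        · have hv1 : valfun p j = Vv p i := by rw [← hm]; exact val_m p h1 h2
          rcases Nat.lt_or_ge i k with hik | hik
          · have hnext : mfun p (i+1) = j + 1 := by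
              rw [mfun_succ p i h1, if_neg hdd]
              omega
            have hv2 : valfun p (j+1) = Vv p (i+1) := by
              rw [← hnext]; exact val_m p (by omega) (by omega)
            have hsame := mem_doublingSet_iff' p (i := i) h1 hik
            by_cases hdn : down p i
            · have hi2 : 2 ≤ i := by
                rcases Nat.eq_or_lt_of_le h1 with he | hgt
                · exfalso
                  apply hdd
                  apply hsame.mpr
                  rw [← he] at hdn ⊢
                  simp only [show (1:ℕ)-1 = 0 from rfl]
                  exact iff_of_true hdn (down_zero p hk)
                · omega
              have hnd' : ¬ down p (i-1) := fun hc => hdd (hsame.mpr (iff_of_true hdn hc))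
              have hpar : j % 2 = 1 := by
                have := (m_parity p i hi2 h2).2 hnd'
                omega
              refine ⟨fun heven => absurd heven (by omega), fun _ => ?_⟩
              rw [hv1, hv2]
              have := Vv_lt p (show entryVal p (i+1) < entryVal p i from hdn)
              linarith
            · have hpar : j % 2 = 0 := by
                rcases Nat.eq_or_lt_of_le h1 with he | hgt
                · rw [← hm, ← he, mfun_one p]
                · have hdn' : down p (i-1) := by
                    by_contra hnd'
                    exact hdd (hsame.mpr (iff_of_false hdn hnd'))
                  have := (m_parity p i (by omega) h2).1 hdn'
                  omega
              refine ⟨fun _ => ?_, fun hodd => absurd hodd (by omega)⟩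
              rw [hv1, hv2]
              have hasc := (not_down_iff p (by omega : i + 1 ≤ k)).mp hdn
              have := Vv_lt p hasc
              linarith
          · have hik' : i = k := by omega
            rw [hik'] at hv1 hm
            have hv2 : valfun p (j+1) = PADv k := val_pad p hk (by omega)
            have hpar : j % 2 = 0 := by omega
            refine ⟨fun _ => ?_, fun hodd => absurd hodd (by omega)⟩
            rw [hv1, hv2]
            have := Vv_le p k hk (le_refl k)
            unfold PADv
            nlinarith
      · obtain ⟨c1, c2⟩ := d_bounds p hd
        have hv1 : valfun p j = fillerVal p i := by rw [← hm]; exact val_filler p hd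
        have hnext : mfun p (i+1) = j + 1 := by
          rw [mfun_succ p i c1, if_pos hd]
          omega
        have hv2 : valfun p (j+1) = Vv p (i+1) := by
          rw [← hnext]; exact val_m p (by omega) (by omega)
        have hsame := (mem_doublingSet_iff' p c1 c2).mp hd
        have hiz : (1:ℤ) ≤ (i:ℤ) := by exact_mod_cast c1
        by_cases hdn : down p i
        · have hpar : j % 2 = 1 := by
            rcases Nat.eq_or_lt_of_le c1 with he | hgt
            · rw [← hm, ← he, mfun_one p]
            · have := (m_parity p i (by omega) (by omega)).1 (hsame.mp hdn)
              omega
          refine ⟨fun heven => absurd heven (by omega), fun _ => ?_⟩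
          rw [hv1, hv2]
          unfold fillerVal
          rw [if_pos (show entryVal p (i+1) < entryVal p i from hdn)]
          have := Vv_lt p (show entryVal p (i+1) < entryVal p i from hdn)
          linarith
        · have hi2 : 2 ≤ i := by
            rcases Nat.eq_or_lt_of_le c1 with he | hgt
            · exfalso
              rw [← he] at hsame hdn
              simp only [show (1:ℕ)-1 = 0 from rfl] at hsame
              exact hdn (hsame.mpr (down_zero p hk))
            · omega
          have hpar : j % 2 = 0 := by
            have hnd' : ¬ down p (i-1) := fun hc => hdn (hsame.mpr hc)
            have := (m_parity p i hi2 (by omega)).2 hnd'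
            omega
          refine ⟨fun _ => ?_, fun hodd => absurd hodd (by omega)⟩
          rw [hv1, hv2]
          unfold fillerVal
          rw [if_neg (show ¬ entryVal p (i+1) < entryVal p i from hdn)]
          have hasc := (not_down_iff p (by omega : i + 1 ≤ k)).mp hdn
          have := Vv_lt p hasc
          linarith
    -- classification for injectivity
    have hclass : ∀ j, j ≤ mfun p k → ∃ i, 1 ≤ i ∧ i ≤ k ∧
        ((mfun p i = j ∧ valfun p j = Vv p i) ∨
          (i ∈ doublingSet p ∧ mfun p i + 1 = j ∧ valfun p j = fillerVal p i)) := by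
      intro j hj
      obtain ⟨i, h1, h2, hc⟩ := coverage p hk j hj
      rcases hc with hm | ⟨hd, hm⟩
      · exact ⟨i, h1, h2, Or.inl ⟨hm, by rw [← hm]; exact val_m p h1 h2⟩⟩
      · exact ⟨i, h1, h2, Or.inr ⟨hd, hm, by rw [← hm]; exact val_filler p hd⟩⟩
    have hbnd : ∀ j i, 1 ≤ i → i ≤ k →
        ((mfun p i = j ∧ valfun p j = Vv p i) ∨
          (i ∈ doublingSet p ∧ mfun p i + 1 = j ∧ valfun p j = fillerVal p i)) →
        Vv p i - ((k:ℤ)-1) ≤ valfun p j ∧ valfun p j ≤ Vv p i + ((k:ℤ)-1) := by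
      intro j i h1 h2 hc
      rcases hc with ⟨-, hv⟩ | ⟨hd, -, hv⟩
      · rw [hv]
        constructor <;> linarith
      · obtain ⟨c1, c2⟩ := d_bounds p hd
        have hiz : (1:ℤ) ≤ (i:ℤ) := by exact_mod_cast c1
        have hiz2 : (i:ℤ) + 1 ≤ (k:ℤ) := by exact_mod_cast c2
        rw [hv]
        unfold fillerVal
        split <;> constructor <;> linarith
    have hinj : ∀ j1 j2, j1 < N → j2 < N → valfun p j1 = valfun p j2 → j1 = j2 := by
      intro j1 j2 hj1 hj2 heq
      by_cases hA : j1 ≤ mfun p k <;> by_cases hB : j2 ≤ mfun p k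
      · obtain ⟨a, a1, a2, ha⟩ := hclass j1 hA
        obtain ⟨b, b1, b2, hb⟩ := hclass j2 hB
        obtain ⟨la, ra⟩ := hbnd j1 a a1 a2 ha
        obtain ⟨lb, rb⟩ := hbnd j2 b b1 b2 hb
        have hae : entryVal p a = entryVal p b := by
          rcases lt_trichotomy (entryVal p a) (entryVal p b) with hlt | he | hlt
          · have := Vv_lt p hlt
            exfalso
            linarith
          · exact he
          · have := Vv_lt p hlt
            exfalso
            linarith
        have hab : a = b := entryVal_inj p a1 a2 b1 b2 hae
        subst hab
        have hVab : Vv p a = Vv p a := rfl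
        rcases ha with ⟨hma, hva⟩ | ⟨hda, hma, hva⟩ <;> rcases hb with ⟨hmb, hvb⟩ | ⟨hdb, hmb, hvb⟩
        · omega
        · exfalso
          rw [hva] at heq
          rw [hvb] at heq
          have hiz : (1:ℤ) ≤ (a:ℤ) := by exact_mod_cast a1
          unfold fillerVal at heq
          split at heq <;> linarith
        · exfalso
          rw [hva] at heq
          rw [hvb] at heq
          have hiz : (1:ℤ) ≤ (a:ℤ) := by exact_mod_cast a1
          unfold fillerVal at heq
          split at heq <;> linarith
        · omega
      · exfalso
        obtain ⟨a, a1, a2, ha⟩ := hclass j1 hA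
        obtain ⟨la, ra⟩ := hbnd j1 a a1 a2 ha
        have hpad : valfun p j2 = PADv k := val_pad p hk (by omega)
        have := Vv_le p a a1 a2
        rw [hpad] at heq
        unfold PADv at heq
        nlinarith
      · exfalso
        obtain ⟨b, b1, b2, hb⟩ := hclass j2 hB
        obtain ⟨lb, rb⟩ := hbnd j2 b b1 b2 hb
        have hpad : valfun p j1 = PADv k := val_pad p hk (by omega)
        have := Vv_le p b b1 b2
        rw [hpad] at heq
        unfold PADv at heq
        nlinarith
      · omega
    obtain ⟨w, hw⟩ := perm_of_val (fun j : Fin N => valfun p j.val)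
      (fun a b hab => Fin.ext (hinj a.val b.val a.isLt b.isLt hab))
    refine ⟨w, ?_, ?_⟩
    · intro i hlt
      by_cases hp : i % 2 = 0
      · rw [if_pos hp, hw]
        exact (hvalt i hlt).1 hp
      · rw [if_neg hp, hw]
        exact (hvalt i hlt).2 (by omega)
    · have hfin : ∀ i : Fin k, mfun p (i.val+1) < N := by
        intro i
        have hle : mfun p (i.val+1) ≤ mfun p k := by
          rcases Nat.eq_or_lt_of_le (show i.val + 1 ≤ k from i.isLt) with he | hlt
          · rw [he]
          · have := mfun_strict_mono p (by omega : 1 ≤ i.val + 1) hlt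
            omega
        omega
      refine ⟨fun i => ⟨mfun p (i.val+1), hfin i⟩, ?_, ?_⟩
      · intro a b hab
        rw [Fin.mk_lt_mk]
        have habv : a.val < b.val := hab
        have := mfun_strict_mono p (show 1 ≤ a.val+1 by omega)
          (show a.val+1 < b.val+1 by omega)
        omega
      · intro i j
        rw [hw]
        show p i < p j ↔ valfun p (mfun p (i.val+1)) < valfun p (mfun p (j.val+1))
        rw [val_m p (by omega) (show i.val+1 ≤ k from i.isLt),
            val_m p (by omega) (show j.val+1 ≤ k from j.isLt)]
        unfold Vv
        rw [entryVal_of_pos p (by omega) (show i.val+1 ≤ k from i.isLt),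
            entryVal_of_pos p (by omega) (show j.val+1 ≤ k from j.isLt)]
        rw [mul_lt_mul_iff_right₀ (show (0:ℤ) < 4*(k:ℤ)+4 by positivity)]
        simp only [Nat.add_sub_cancel, Fin.eta]
        rw [Fin.lt_def]
        push_cast
        omega

end AltPat
namespace AltPat

lemma main_aux {k k' : ℕ} (p : Equiv.Perm (Fin k)) (q : Equiv.Perm (Fin k'))
    (h : (k + doublingNumber p + 1) / 2 < (k' + doublingNumber q + 1) / 2) :
    ∃ n : ℕ, Even n ∧
      Nat.card {w : Equiv.Perm (Fin n) // IsAlternating w ∧ ¬ ContainsPat w p} ≠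
      Nat.card {w : Equiv.Perm (Fin n) // IsAlternating w ∧ ¬ ContainsPat w q} := by
  classical
  set n := 2*((k + doublingNumber p + 1)/2) with hn
  refine ⟨n, ⟨(k + doublingNumber p + 1)/2, by omega⟩, ?_⟩
  have hq : ∀ w : Equiv.Perm (Fin n), IsAlternating w → ¬ ContainsPat w q := by
    intro w hw hc
    have := lower_bound w q hw hc
    omega
  obtain ⟨w₀, hw₀alt, hw₀cont⟩ := upper_bound p
  have hss : {w : Equiv.Perm (Fin n) | IsAlternating w ∧ ¬ ContainsPat w p} ⊂
      {w : Equiv.Perm (Fin n) | IsAlternating w ∧ ¬ ContainsPat w q} := by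
    constructor
    · intro w hw
      exact ⟨hw.1, hq w hw.1⟩
    · intro hsub
      have hmem : w₀ ∈ {w : Equiv.Perm (Fin n) | IsAlternating w ∧ ¬ ContainsPat w q} :=
        ⟨hw₀alt, hq w₀ hw₀alt⟩
      exact (hsub hmem).2 hw₀cont
  have hlt := Set.ncard_lt_ncard hss (Set.toFinite _)
  have e1 : Nat.card {w : Equiv.Perm (Fin n) // IsAlternating w ∧ ¬ ContainsPat w p} =
      Set.ncard {w : Equiv.Perm (Fin n) | IsAlternating w ∧ ¬ ContainsPat w p} :=
    Nat.card_coe_set_eq _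
  have e2 : Nat.card {w : Equiv.Perm (Fin n) // IsAlternating w ∧ ¬ ContainsPat w q} =
      Set.ncard {w : Equiv.Perm (Fin n) | IsAlternating w ∧ ¬ ContainsPat w q} :=
    Nat.card_coe_set_eq _
  rw [e1, e2]
  exact ne_of_lt hlt

end AltPat

theorem stmt5 (k k' : ℕ) (p : Equiv.Perm (Fin k)) (q : Equiv.Perm (Fin k'))
    (h : (k + doublingNumber p + 1) / 2 ≠ (k' + doublingNumber q + 1) / 2) :
    ∃ n : ℕ, Even n ∧
      Nat.card {w : Equiv.Perm (Fin n) // IsAlternating w ∧ ¬ ContainsPat w p} ≠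
      Nat.card {w : Equiv.Perm (Fin n) // IsAlternating w ∧ ¬ ContainsPat w q} := by
  rcases h.lt_or_gt with hlt | hlt
  · exact AltPat.main_aux p q hlt
  · obtain ⟨n, he, hne⟩ := AltPat.main_aux q p hlt
    exact ⟨n, he, hne.symm⟩
end

section
/- For all k ≥ 1, the decreasing pattern k(k-1)(k-2)···1 is not equivalent for even-length alternating permutations to any other pattern of length k: for every q in S_k with q ≠ k(k-1)···1, there exists an even n with |A_n(q)| ≠ |A_n(k(k-1)···1)|. -/
/-- The decreasing permutation k(k-1)(k-2)···1. -/
def decPerm (k : ℕ) : Equiv.Perm (Fin k) := ⟨Fin.rev, Fin.rev, Fin.rev_rev, Fin.rev_rev⟩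

lemma decPerm_apply {k : ℕ} (i : Fin k) : decPerm k i = i.rev := rfl

/-- If q is not the decreasing permutation, it has an adjacent ascent. -/
lemma exists_ascent {k : ℕ} (q : Equiv.Perm (Fin k)) (hq : q ≠ decPerm k) :
    ∃ a : ℕ, ∃ h : a + 1 < k,
      ((q ⟨a, Nat.lt_of_succ_lt h⟩ : Fin k) : ℕ) < ((q ⟨a + 1, h⟩ : Fin k) : ℕ) := by
  by_contra hc
  push_neg at hc
  apply hq
  set N : ℕ → ℕ := fun i => if h : i < k then ((q ⟨i, h⟩ : Fin k) : ℕ) else 0 with hN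
  have hdesc : ∀ a, a + 1 < k → N (a + 1) < N a := by
    intro a h
    have h1 := hc a h
    have hne : ((q ⟨a + 1, h⟩ : Fin k) : ℕ) ≠ ((q ⟨a, Nat.lt_of_succ_lt h⟩ : Fin k) : ℕ) := by
      intro he
      have := q.injective (Fin.ext he)
      simp [Fin.ext_iff] at this
    simp only [hN, dif_pos h, dif_pos (Nat.lt_of_succ_lt h)]
    omega
  have hchain : ∀ d i, i + d < k → N (i + d) + d ≤ N i := by
    intro d
    induction d with
    | zero => intro i _; simp
    | succ p ih =>
      intro i hi
      have h1 := hdesc (i + p) (by omega)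
      have h2 := ih i (by omega)
      have : i + (p + 1) = (i + p) + 1 := by omega
      rw [this]
      omega
  have hlt : ∀ i, i < k → N i < k := by
    intro i hi
    simp only [hN, dif_pos hi]
    exact (q ⟨i, hi⟩).isLt
  have hval : ∀ i, i < k → N i = k - 1 - i := by
    intro i hi
    have h1 : N i + i ≤ N 0 := by
      have := hchain i 0 (by omega)
      simpa using this
    have h2 : N (k - 1) + (k - 1 - i) ≤ N i := by
      have := hchain (k - 1 - i) i (by omega)
      have e : i + (k - 1 - i) = k - 1 := by omega
      rwa [e] at this
    have h3 := hlt 0 (by omega)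
    omega
  ext i
  have hi := i.isLt
  have : ((q i : Fin k) : ℕ) = N i := by simp [hN, dif_pos hi, Fin.eta]
  have hrev : ((decPerm k i : Fin k) : ℕ) = k - 1 - (i : ℕ) := by
    rw [decPerm_apply, Fin.val_rev]; omega
  have := hval i hi
  omega

/-- No alternating permutation of length 2k-2 contains the decreasing pattern of length k. -/
lemma not_contains_dec {k : ℕ} (hk : 2 ≤ k) (w : Equiv.Perm (Fin (2 * k - 2)))
    (hw : IsAlternating w) : ¬ ContainsPat w (decPerm k) := by
  rintro ⟨f, hf, hpat⟩
  have hanti : ∀ i j : Fin k, i < j → w (f j) < w (f i) := by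
    intro i j hij
    have h1 : decPerm k j < decPerm k i := by
      rw [decPerm_apply, decPerm_apply]
      exact Fin.rev_lt_rev.mpr hij
    exact (hpat j i).mp h1
  have hg : ∀ (m : ℕ) (hm : m < k), m ≤ (f ⟨m, hm⟩ : ℕ) / 2 := by
    intro m
    induction m with
    | zero => intro _; omega
    | succ p ih =>
      intro hm
      have hp : p < k := by omega
      have h1 := ih hp
      have hlt : (f ⟨p, hp⟩ : ℕ) < (f ⟨p + 1, hm⟩ : ℕ) := hf (by simp [Fin.lt_def])
      by_contra hcon
      push_neg at hcon
      -- then f ⟨p⟩ and f ⟨p+1⟩ are 2m and 2m+1 for some m with 2m even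
      set A := (f ⟨p, hp⟩ : ℕ) with hA
      set B := (f ⟨p + 1, hm⟩ : ℕ) with hB
      have hAB : B = A + 1 ∧ A % 2 = 0 := by omega
      have hBn : B < 2 * k - 2 := (f ⟨p + 1, hm⟩).isLt
      have halt := hw A (by omega)
      rw [if_pos hAB.2] at halt
      have e1 : (⟨A, by omega⟩ : Fin (2 * k - 2)) = f ⟨p, hp⟩ := Fin.ext rfl
      have e2 : (⟨A + 1, by omega⟩ : Fin (2 * k - 2)) = f ⟨p + 1, hm⟩ := Fin.ext (show A + 1 = B from by omega)
      rw [e1, e2] at halt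
      have := hanti ⟨p, hp⟩ ⟨p + 1, hm⟩ (by simp [Fin.lt_def])
      exact absurd halt (not_lt.mpr (le_of_lt this))
  have h1 := hg (k - 1) (by omega)
  have h2 := (f ⟨k - 1, by omega⟩).isLt
  omega

/-- If q has an adjacent ascent, some alternating permutation of length 2k-2 contains q. -/
lemma contains_witness {k : ℕ} (hk : 2 ≤ k) (q : Equiv.Perm (Fin k))
    (a : ℕ) (ha : a + 1 < k)
    (hasc : ((q ⟨a, Nat.lt_of_succ_lt ha⟩ : Fin k) : ℕ) < ((q ⟨a + 1, ha⟩ : Fin k) : ℕ)) :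
    ∃ w : Equiv.Perm (Fin (2 * k - 2)), IsAlternating w ∧ ContainsPat w q := by
  set t : ℕ := k - 2 - a with ht
  set Q : ℕ → ℕ := fun i => if h : i < k then ((q ⟨i, h⟩ : Fin k) : ℕ) else 0 with hQ
  have hQlt : ∀ i, Q i < k := by
    intro i
    simp only [hQ]
    split
    · exact (q ⟨i, by assumption⟩).isLt
    · omega
  have hQinj : ∀ i j, i < k → j < k → Q i = Q j → i = j := by
    intro i j hi hj he
    simp only [hQ, dif_pos hi, dif_pos hj] at he
    have := q.injective (Fin.ext he)
    simpa [Fin.ext_iff] using this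
  have hQasc : Q a < Q (a + 1) := by
    simp only [hQ, dif_pos (Nat.lt_of_succ_lt ha), dif_pos ha]
    exact hasc
  set W : ℕ → ℕ := fun x =>
    if x % 2 = 0 then (if x / 2 ≤ a then t + Q (x / 2) else x / 2 - (a + 1))
    else (if x / 2 < a then t + k + x / 2 else t + Q (x / 2 + 1)) with hW
  have hWeven : ∀ j, W (2 * j) = if j ≤ a then t + Q j else j - (a + 1) := by
    intro j
    simp only [hW]
    rw [if_pos (by omega : 2 * j % 2 = 0), Nat.mul_div_cancel_left j (by norm_num)]
  have hWodd : ∀ j, W (2 * j + 1) = if j < a then t + k + j else t + Q (j + 1) := by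
    intro j
    have h1 : (2 * j + 1) % 2 = 1 := by omega
    have h2 : (2 * j + 1) / 2 = j := by omega
    simp only [hW, h1, h2]
    norm_num
  have hWlt : ∀ x, x < 2 * k - 2 → W x < 2 * k - 2 := by
    intro x hx
    simp only [hW]
    have b1 := hQlt (x / 2)
    have b2 := hQlt (x / 2 + 1)
    split <;> split <;> omega
  have hWinj : ∀ x y, x < 2 * k - 2 → y < 2 * k - 2 → W x = W y → x = y := by
    intro x y hx hy h
    simp only [hW] at h
    have b1 := hQlt (x / 2)
    have b2 := hQlt (x / 2 + 1)
    have b3 := hQlt (y / 2)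
    have b4 := hQlt (y / 2 + 1)
    split_ifs at h
    all_goals try omega
    · -- both even, both ≤ a : q-values
      have := hQinj (x / 2) (y / 2) (by omega) (by omega) (by omega)
      omega
    · -- x even ≤ a, y odd ≥ a
      have := hQinj (x / 2) (y / 2 + 1) (by omega) (by omega) (by omega)
      omega
    · -- x odd ≥ a, y even ≤ a
      have := hQinj (x / 2 + 1) (y / 2) (by omega) (by omega) (by omega)
      omega
    · -- both odd ≥ a
      have := hQinj (x / 2 + 1) (y / 2 + 1) (by omega) (by omega) (by omega)
      omega
  -- the permutation
  have hbij : Function.Bijective (fun x : Fin (2 * k - 2) => (⟨W x, hWlt x x.isLt⟩ : Fin (2 * k - 2))) := by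
    rw [Fintype.bijective_iff_injective_and_card]
    refine ⟨?_, rfl⟩
    intro x y hxy
    exact Fin.ext (hWinj x y x.isLt y.isLt (congrArg Fin.val hxy))
  set w : Equiv.Perm (Fin (2 * k - 2)) := Equiv.ofBijective _ hbij with hw
  have hwapp : ∀ x : Fin (2 * k - 2), (w x : ℕ) = W x := fun x => rfl
  -- step lemmas
  have hstep_up : ∀ j, 2 * j + 1 < 2 * k - 2 → W (2 * j) < W (2 * j + 1) := by
    intro j hj
    rw [hWeven, hWodd]
    rcases lt_trichotomy j a with h | h | h
    · rw [if_pos (le_of_lt h), if_pos h]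
      have := hQlt j
      omega
    · subst h
      rw [if_pos (le_refl _), if_neg (lt_irrefl _)]
      omega
    · rw [if_neg (by omega), if_neg (by omega)]
      have := hQlt (j + 1)
      omega
  have hstep_down : ∀ j, 2 * j + 2 < 2 * k - 2 → W (2 * j + 2) < W (2 * j + 1) := by
    intro j hj
    have e : 2 * j + 2 = 2 * (j + 1) := by omega
    rw [e, hWeven, hWodd]
    rcases lt_or_ge j a with h | h
    · rw [if_pos (by omega), if_pos h]
      have := hQlt (j + 1)
      omega
    · rw [if_neg (by omega), if_neg (by omega)]
      have := hQlt (j + 1)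
      omega
  have halt : IsAlternating w := by
    intro i h
    split_ifs with hpar
    · obtain ⟨j, rfl⟩ : ∃ j, i = 2 * j := ⟨i / 2, by omega⟩
      rw [Fin.lt_def, hwapp, hwapp]
      exact hstep_up j h
    · obtain ⟨j, rfl⟩ : ∃ j, i = 2 * j + 1 := ⟨i / 2, by omega⟩
      rw [Fin.lt_def, hwapp, hwapp]
      have e : 2 * j + 1 + 1 = 2 * j + 2 := by omega
      simp only [e]
      exact hstep_down j (by omega)
  refine ⟨w, halt, ?_⟩
  -- containment
  refine ⟨fun i => ⟨if (i : ℕ) ≤ a then 2 * (i : ℕ) else 2 * (i : ℕ) - 1, by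
    have := i.isLt; split <;> omega⟩, ?_, ?_⟩
  · intro i j hij
    rw [Fin.lt_def] at hij ⊢
    simp only
    split_ifs <;> omega
  · have key : ∀ i : Fin k, W (if (i : ℕ) ≤ a then 2 * (i : ℕ) else 2 * (i : ℕ) - 1) = t + Q i := by
      intro i
      split_ifs with h
      · rw [hWeven, if_pos h]
      · have e : 2 * (i : ℕ) - 1 = 2 * ((i : ℕ) - 1) + 1 := by omega
        rw [e, hWodd, if_neg (by omega)]
        have e2 : (i : ℕ) - 1 + 1 = (i : ℕ) := by omega
        rw [e2]
    intro i j
    rw [Fin.lt_def, Fin.lt_def, hwapp, hwapp]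
    simp only [key]
    have hQi : Q (i : ℕ) = ((q i : Fin k) : ℕ) := by
      simp [hQ, dif_pos i.isLt, Fin.eta]
    have hQj : Q (j : ℕ) = ((q j : Fin k) : ℕ) := by
      simp [hQ, dif_pos j.isLt, Fin.eta]
    rw [hQi, hQj]
    omega

theorem stmt6 (k : ℕ) (hk : 1 ≤ k) (q : Equiv.Perm (Fin k)) (hq : q ≠ decPerm k) :
    ∃ n : ℕ, Even n ∧
      Nat.card {w : Equiv.Perm (Fin n) // IsAlternating w ∧ ¬ ContainsPat w q} ≠
      Nat.card {w : Equiv.Perm (Fin n) // IsAlternating w ∧ ¬ ContainsPat w (decPerm k)} := by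
  rcases eq_or_lt_of_le hk with h1 | hk2
  · exfalso
    apply hq
    have : Subsingleton (Fin k) := by rw [← h1]; infer_instance
    exact Equiv.ext fun i => Subsingleton.elim _ _
  obtain ⟨a, ha, hasc⟩ := exists_ascent q hq
  obtain ⟨w₀, hw₀alt, hw₀con⟩ := contains_witness hk2 q a ha hasc
  refine ⟨2 * k - 2, ⟨k - 1, by omega⟩, ?_⟩
  haveI : Fintype {w : Equiv.Perm (Fin (2 * k - 2)) // IsAlternating w ∧ ¬ ContainsPat w q} :=
    Fintype.ofFinite _
  haveI : Fintype {w : Equiv.Perm (Fin (2 * k - 2)) // IsAlternating w ∧ ¬ ContainsPat w (decPerm k)} :=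
    Fintype.ofFinite _
  rw [Nat.card_eq_fintype_card, Nat.card_eq_fintype_card]
  apply ne_of_lt
  apply Fintype.card_lt_of_injective_of_notMem
    (f := fun x => ⟨x.1, x.2.1, not_contains_dec hk2 x.1 x.2.1⟩)
    (b := ⟨w₀, hw₀alt, not_contains_dec hk2 w₀ hw₀alt⟩)
  · intro hmem
    obtain ⟨x, hx⟩ := hmem
    have : x.1 = w₀ := congrArg Subtype.val hx
    exact x.2.2 (this ▸ hw₀con)
  · intro x y hxy
    simp only [Subtype.mk.injEq] at hxy
    exact Subtype.ext hxy
end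

section
/- Let Y be a Young diagram with n rows and n columns (drawn in English notation, with row lengths weakly decreasing). If Y does not contain the staircase shape (n, n-1, ..., 1), then Y has no transversal. If Y contains the staircase shape, then Y has exactly one transversal avoiding the matrix M(12) (namely the anti-diagonal transversal {(i, n+1-i)}), and exactly one transversal avoiding the matrix M(21). -/
/-- A transversal of the Young diagram with row lengths `μ` inside an `n × n` square:
`t i` is the column of the unique element in row `i`. -/
def IsTransv {n : ℕ} (μ : Fin n → ℕ) (t : Fin n → Fin n) : Prop :=
  Function.Bijective t ∧ ∀ i, (t i).val < μ i

/-- The transversal `t` contains the matrix M(12). -/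
def ContainsM12 {n : ℕ} (t : Fin n → Fin n) : Prop :=
  ∃ i j : Fin n, i < j ∧ t i < t j

/-- The transversal `t` contains the matrix M(21) (the corner square must lie in the diagram). -/
def ContainsM21 {n : ℕ} (μ : Fin n → ℕ) (t : Fin n → Fin n) : Prop :=
  ∃ i j : Fin n, i < j ∧ t j < t i ∧ (t i).val < μ j

/-! The rows `i, …, n-1` of a transversal occupy `n - i` distinct columns, all to the left of
`μ i`; hence a transversal forces the staircase. Avoiding M(12) makes a transversal strictly
decreasing, so it is the anti-diagonal. A transversal maximising `∑ k * t k` avoids M(21), since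
untangling an M(21) pattern by swapping its two rows stays inside the diagram and increases the
sum. Two M(21)-avoiding transversals agree from the bottom row up: at the lowest row `j` where
they differ, the column of the larger entry is used by the other transversal in a row above `j`,
which creates an M(21) pattern in it. -/

namespace IsTransv

variable {n : ℕ} {μ : Fin n → ℕ}

theorem sub_le_of_antitone {t : Fin n → Fin n} (hμ : Antitone μ) (ht : IsTransv μ t)
    (i : Fin n) : n - i.val ≤ μ i := by
  have hmaps : Set.MapsTo (fun k => (t k).val) (Finset.Ici i) (Finset.range (μ i)) :=
    fun k hk => Finset.mem_range.2 <| (ht.2 k).trans_le (hμ (Finset.mem_Ici.1 hk))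
  have hinj : Set.InjOn (fun k => (t k).val) (Finset.Ici i) :=
    fun a _ b _ hab => ht.1.1 (Fin.ext hab)
  simpa [Fin.card_Ici] using Finset.card_le_card_of_injOn _ hmaps hinj

theorem rev_of_sub_le (hst : ∀ i : Fin n, n - i.val ≤ μ i) : IsTransv μ Fin.rev := by
  refine ⟨Fin.rev_involutive.bijective, fun i => ?_⟩
  have := hst i
  have := i.isLt
  rw [Fin.val_rev]
  omega

end IsTransv

section Patterns

variable {n : ℕ}

theorem not_containsM12_rev : ¬ ContainsM12 (Fin.rev : Fin n → Fin n) :=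
  fun ⟨_, _, hij, hlt⟩ => (Fin.rev_lt_rev.1 hlt).asymm hij

theorem strictAnti_of_not_containsM12 {t : Fin n → Fin n} (ht : Function.Injective t)
    (h : ¬ ContainsM12 t) : StrictAnti t :=
  fun i j hij => (not_lt.1 fun hlt => h ⟨i, j, hij, hlt⟩).lt_of_ne (ht.ne hij.ne')

theorem eq_rev_of_not_containsM12 {t : Fin n → Fin n} (ht : Function.Injective t)
    (h : ¬ ContainsM12 t) : t = Fin.rev := by
  have hmono : StrictMono (t ∘ Fin.rev) :=
    (strictAnti_of_not_containsM12 ht h).comp Fin.rev_strictAnti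
  funext i
  simpa using congrFun hmono.eq_id i.rev

theorem sum_mul_lt_sum_mul_swap (t : Fin n → Fin n) {i j : Fin n} (hij : i < j)
    (hji : t j < t i) :
    ∑ k, k.val * (t k).val < ∑ k, k.val * (t (Equiv.swap i j k)).val := by
  classical
  rw [← Finset.sum_add_sum_compl {i, j}, ← Finset.sum_add_sum_compl {i, j} (fun k => _ * _),
    Finset.sum_pair hij.ne, Finset.sum_pair hij.ne, Equiv.swap_apply_left,
    Equiv.swap_apply_right]
  have hrest : ∑ k ∈ ({i, j} : Finset (Fin n))ᶜ, k.val * (t (Equiv.swap i j k)).val =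
      ∑ k ∈ ({i, j} : Finset (Fin n))ᶜ, k.val * (t k).val := by
    refine Finset.sum_congr rfl fun k hk => ?_
    simp only [Finset.mem_compl, Finset.mem_insert, Finset.mem_singleton, not_or] at hk
    rw [Equiv.swap_apply_of_ne_of_ne hk.1 hk.2]
  have hij' : i.val < j.val := hij
  have hji' : (t j).val < (t i).val := hji
  rw [hrest]
  nlinarith [Nat.mul_lt_mul_of_lt_of_lt hij' hji']

variable {μ : Fin n → ℕ}

theorem exists_isTransv_not_containsM21 (hμ : Antitone μ) (h : ∃ t, IsTransv μ t) :
    ∃ t, IsTransv μ t ∧ ¬ ContainsM21 μ t := by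
  classical
  obtain ⟨t, ht, hmax⟩ := (Finset.univ.filter (IsTransv μ)).exists_max_image
    (fun t => ∑ k, k.val * (t k).val) (by simpa [Finset.filter_nonempty_iff] using h)
  rw [Finset.mem_filter] at ht
  refine ⟨t, ht.2, fun ⟨i, j, hij, hji, hcorner⟩ => ?_⟩
  have hswap : IsTransv μ (t ∘ Equiv.swap i j) := by
    refine ⟨ht.2.1.comp (Equiv.swap i j).bijective, fun k => ?_⟩
    rcases eq_or_ne k i with rfl | hki
    · simpa using (ht.2.2 j).trans_le (hμ hij.le)
    rcases eq_or_ne k j with rfl | hkj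
    · simpa using hcorner
    simpa [Equiv.swap_apply_of_ne_of_ne hki hkj] using ht.2.2 k
  exact (sum_mul_lt_sum_mul_swap t hij hji).not_ge
    (hmax _ (Finset.mem_filter.2 ⟨Finset.mem_univ _, hswap⟩))

theorem le_of_not_containsM21 {s t : Fin n → Fin n} (hs : IsTransv μ s) (ht : IsTransv μ t)
    (htM : ¬ ContainsM21 μ t) {j : Fin n} (hagree : ∀ k, j < k → s k = t k) : s j ≤ t j := by
  by_contra! hlt
  obtain ⟨i, hi⟩ := ht.1.2 (s j)
  rcases lt_trichotomy i j with hij | rfl | hji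
  · exact htM ⟨i, j, hij, hi ▸ hlt, hi ▸ hs.2 j⟩
  · exact hlt.ne hi
  · exact hji.ne' (hs.1.1 (hi ▸ hagree i hji))

theorem eq_of_not_containsM21 {s t : Fin n → Fin n} (hs : IsTransv μ s) (hsM : ¬ ContainsM21 μ s)
    (ht : IsTransv μ t) (htM : ¬ ContainsM21 μ t) : s = t := by
  classical
  by_contra hne
  obtain ⟨j, hj, hmax⟩ := (Finset.univ.filter fun k => s k ≠ t k).exists_max_image id
    (by simpa [Finset.filter_nonempty_iff, funext_iff] using hne)
  have hagree : ∀ k, j < k → s k = t k := fun k hjk => by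
    by_contra hk
    exact (hmax k (by simpa using hk)).not_gt hjk
  exact (Finset.mem_filter.1 hj).2 <| le_antisymm (le_of_not_containsM21 hs ht htM hagree)
    (le_of_not_containsM21 ht hs hsM fun k hjk => (hagree k hjk).symm)

end Patterns

theorem stmt8_general (n : ℕ) (μ : Fin n → ℕ)
    (hanti : ∀ i j : Fin n, i ≤ j → μ j ≤ μ i) :
    ((¬ ∀ i : Fin n, n - i.val ≤ μ i) → ¬ ∃ t : Fin n → Fin n, IsTransv μ t) ∧
    ((∀ i : Fin n, n - i.val ≤ μ i) →
      (IsTransv μ (Fin.rev : Fin n → Fin n) ∧ ¬ ContainsM12 (Fin.rev : Fin n → Fin n)) ∧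
      (∃! t : Fin n → Fin n, IsTransv μ t ∧ ¬ ContainsM12 t) ∧
      (∃! t : Fin n → Fin n, IsTransv μ t ∧ ¬ ContainsM21 μ t)) := by
  have hμ : Antitone μ := fun i j => hanti i j
  refine ⟨fun hst ⟨t, ht⟩ => hst (ht.sub_le_of_antitone hμ), fun hst => ?_⟩
  have hrev := IsTransv.rev_of_sub_le hst
  refine ⟨⟨hrev, not_containsM12_rev⟩,
    ⟨Fin.rev, ⟨hrev, not_containsM12_rev⟩, fun t ht => eq_rev_of_not_containsM12 ht.1.1.1 ht.2⟩,
    ?_⟩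
  obtain ⟨t, ht, htM⟩ := exists_isTransv_not_containsM21 hμ ⟨_, hrev⟩
  exact ⟨t, ⟨ht, htM⟩, fun s hs => eq_of_not_containsM21 hs.1 hs.2 ht htM⟩

theorem stmt8 (n : ℕ) (μ : Fin n → ℕ)
    (hanti : ∀ i j : Fin n, i ≤ j → μ j ≤ μ i) (hcol : ∀ i, μ i ≤ n) :
    ((¬ ∀ i : Fin n, n - i.val ≤ μ i) → ¬ ∃ t : Fin n → Fin n, IsTransv μ t) ∧
    ((∀ i : Fin n, n - i.val ≤ μ i) →
      (IsTransv μ (Fin.rev : Fin n → Fin n) ∧ ¬ ContainsM12 (Fin.rev : Fin n → Fin n)) ∧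
      (∃! t : Fin n → Fin n, IsTransv μ t ∧ ¬ ContainsM12 t) ∧
      (∃! t : Fin n → Fin n, IsTransv μ t ∧ ¬ ContainsM21 μ t)) :=
  stmt8_general n μ hanti
end

section
/- Let n be a nonnegative integer and let p, q be patterns. Valid transversals of the AD-Young diagram with square Young diagram (2n+1)^(2n+1), required ascent set {1,3,5,...,2n-1}, and required descent set {2,4,...,2n}, that avoid M(p), are in bijection with alternating permutations of length 2n+1 that avoid p. In particular, if |S_Y(M(p))| = |S_Y(M(q))| for all 1-alternating AD-Young diagrams Y, then |A_{2n+1}(p)| = |A_{2n+1}(q)| for all n. -/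
/-- A valid transversal of the AD-Young diagram (μ, A, D). -/
def ValidTransv {n : ℕ} (μ : Fin n → ℕ) (A D : Finset ℕ) (t : Fin n → Fin n) : Prop :=
  IsTransv μ t ∧
  (∀ i ∈ A, ∀ h : i + 1 < n, t ⟨i, by omega⟩ < t ⟨i + 1, h⟩) ∧
  (∀ i ∈ D, ∀ h : i + 1 < n, t ⟨i + 1, h⟩ < t ⟨i, by omega⟩)

/-- The transversal  of the Young diagram  contains the permutation matrix M(p). -/
def TransContains {n b : ℕ} (μ : Fin n → ℕ) (t : Fin n → Fin n) (p : Equiv.Perm (Fin b)) : Prop :=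
  ∃ a c : Fin b → Fin n, StrictMono a ∧ StrictMono c ∧
    (∀ i, t (a i) = c (p i)) ∧ (∀ i, (c i).val < μ (a i))

/-- The AD-Young diagram with gap data (A, D) on an n-row diagram is 1-alternating. -/
def OneAlternatingAD (n : ℕ) (A D : Finset ℕ) : Prop :=
  0 ∉ D ∧ ∀ i : ℕ, i + 1 < n → (i ∈ A ↔ i + 1 ∈ D)

/-- Odd positions `1, 3, …, 2n - 1` of the paper, `0`-indexed. -/
def altAscents (n : ℕ) : Finset ℕ := (Finset.range (2 * n)).filter fun i => i % 2 = 0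

def altDescents (n : ℕ) : Finset ℕ := (Finset.range (2 * n)).filter fun i => i % 2 = 1

theorem transContains_const_iff_containsPat {m b : ℕ} (w : Equiv.Perm (Fin m))
    (p : Equiv.Perm (Fin b)) : TransContains (fun _ => m) w p ↔ ContainsPat w p := by
  constructor
  · rintro ⟨a, c, ha, hc, hac, -⟩
    refine ⟨a, ha, fun i j => ?_⟩
    rw [hac i, hac j]
    exact hc.lt_iff_lt.symm
  · rintro ⟨f, hf, hpat⟩
    refine ⟨f, fun i => w (f (p.symm i)), hf, fun i j hij => ?_, fun i => by simp,
      fun i => (w _).isLt⟩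
    exact (hpat (p.symm i) (p.symm j)).mp (by simpa using hij)

theorem validTransv_altAscents_altDescents_iff (n : ℕ) (w : Equiv.Perm (Fin (2 * n + 1))) :
    ValidTransv (fun _ => 2 * n + 1) (altAscents n) (altDescents n) w ↔ IsAlternating w := by
  simp only [ValidTransv, IsTransv, altAscents, altDescents, Finset.mem_filter, Finset.mem_range,
    Fin.is_lt, implies_true, and_true, w.bijective, true_and]
  constructor
  · rintro ⟨hasc, hdesc⟩ i hi
    split_ifs with hpar
    · exact hasc i ⟨by omega, hpar⟩ hi
    · exact hdesc i ⟨by omega, by omega⟩ hi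
  · intro halt
    refine ⟨fun i hi h => ?_, fun i hi h => ?_⟩
    · simpa [hi.2] using halt i h
    · simpa [hi.2] using halt i h

theorem oneAlternatingAD_altAscents_altDescents (n : ℕ) :
    OneAlternatingAD (2 * n + 1) (altAscents n) (altDescents n) := by
  refine ⟨by simp [altDescents], fun i hi => ?_⟩
  simp only [altAscents, altDescents, Finset.mem_filter, Finset.mem_range]
  omega

theorem disjoint_altAscents_altDescents (n : ℕ) : Disjoint (altAscents n) (altDescents n) := by
  rw [Finset.disjoint_left]
  simp only [altAscents, altDescents, Finset.mem_filter]
  omega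

noncomputable def avoidingAltTransvEquiv (n : ℕ) {b : ℕ} (p : Equiv.Perm (Fin b)) :
    {t : Fin (2 * n + 1) → Fin (2 * n + 1) //
        ValidTransv (fun _ => 2 * n + 1) (altAscents n) (altDescents n) t ∧
        ¬ TransContains (fun _ => 2 * n + 1) t p} ≃
      {w : Equiv.Perm (Fin (2 * n + 1)) // IsAlternating w ∧ ¬ ContainsPat w p} where
  toFun t := ⟨Equiv.ofBijective t.1 t.2.1.1.1, by
    rw [← validTransv_altAscents_altDescents_iff, ← transContains_const_iff_containsPat]
    exact t.2⟩
  invFun w := ⟨w, by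
    rw [validTransv_altAscents_altDescents_iff, transContains_const_iff_containsPat]
    exact w.2⟩
  left_inv _ := rfl
  right_inv _ := Subtype.ext (Equiv.ext fun _ => rfl)

theorem stmt10 (b b' : ℕ) (p : Equiv.Perm (Fin b)) (q : Equiv.Perm (Fin b')) :
    (∀ n : ℕ,
      Nonempty
        ({t : Fin (2 * n + 1) → Fin (2 * n + 1) //
            ValidTransv (fun _ => 2 * n + 1)
              ((Finset.range (2 * n)).filter fun i => i % 2 = 0)
              ((Finset.range (2 * n)).filter fun i => i % 2 = 1) t ∧
            ¬ TransContains (fun _ => 2 * n + 1) t p} ≃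
          {w : Equiv.Perm (Fin (2 * n + 1)) // IsAlternating w ∧ ¬ ContainsPat w p})) ∧
    ((∀ (m : ℕ) (μ : Fin m → ℕ) (A D : Finset ℕ),
        (∀ i j : Fin m, i ≤ j → μ j ≤ μ i) → (∀ i, μ i ≤ m) →
        Disjoint A D →
        (∀ i ∈ A ∪ D, ∃ h : i + 1 < m, μ ⟨i, by omega⟩ = μ ⟨i + 1, h⟩) →
        OneAlternatingAD m A D →
        Nat.card {t : Fin m → Fin m // ValidTransv μ A D t ∧ ¬ TransContains μ t p} =
        Nat.card {t : Fin m → Fin m // ValidTransv μ A D t ∧ ¬ TransContains μ t q}) →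
      ∀ n : ℕ,
        Nat.card {w : Equiv.Perm (Fin (2 * n + 1)) // IsAlternating w ∧ ¬ ContainsPat w p} =
        Nat.card {w : Equiv.Perm (Fin (2 * n + 1)) // IsAlternating w ∧ ¬ ContainsPat w q}) := by
  refine ⟨fun n => ⟨avoidingAltTransvEquiv n p⟩, fun hcard n => ?_⟩
  rw [← Nat.card_congr (avoidingAltTransvEquiv n p), ← Nat.card_congr (avoidingAltTransvEquiv n q)]
  refine hcard _ _ _ _ (fun _ _ _ => le_rfl) (fun _ => le_rfl)
    (disjoint_altAscents_altDescents n) (fun i hi => ⟨?_, rfl⟩)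
    (oneAlternatingAD_altAscents_altDescents n)
  simp only [altAscents, altDescents, Finset.mem_union, Finset.mem_filter, Finset.mem_range] at hi
  omega
end

section
/- Let q be the repetitive pattern of length b with q(1) = b (i.e., q = b 1 2 ··· (b-1)). For k ≥ b-1, b-1 ≤ x ≤ k, and any m ≥ 1, every permutation p in D^k_{km+x}(q) satisfies p(km + x) = km + x, i.e., the last entry of p is the maximum value. -/
/-- A permutation has descent type k if its entries increase within each consecutive
block of length k and descend exactly at the block boundaries. -/
def DescentType (k : ℕ) {n : ℕ} (w : Equiv.Perm (Fin n)) : Prop :=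
  ∀ (i : ℕ) (h : i + 1 < n),
    if (i + 1) % k = 0 then w ⟨i + 1, h⟩ < w ⟨i, by omega⟩
    else w ⟨i, by omega⟩ < w ⟨i + 1, h⟩

/-- The repetitive pattern b 1 2 ... (b-1). -/
def qpat (b : ℕ) : Equiv.Perm (Fin b) := (finRotate b)⁻¹

lemma qpat_val {b : ℕ} (hb : 2 ≤ b) (i : Fin b) :
    (qpat b i).val = if i.val = 0 then b - 1 else i.val - 1 := by
  obtain ⟨b', rfl⟩ : ∃ b', b = b' + 1 := ⟨b - 1, by omega⟩
  have hi : i = finRotate (b' + 1) (qpat (b' + 1) i) := by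
    simp [qpat]
  set y := qpat (b' + 1) i with hy
  rw [finRotate_succ_apply] at hi
  have hval : i.val = (y.val + 1) % (b' + 1) := by
    rw [hi]; simp [Fin.add_def]
  have hylt := y.isLt
  rcases Nat.lt_or_ge y.val b' with h | h
  · rw [Nat.mod_eq_of_lt (by omega)] at hval
    rw [if_neg (by omega)]; omega
  · have hy' : y.val = b' := by omega
    rw [hy', Nat.mod_self] at hval
    rw [if_pos hval]; omega

/-- Values increase along a run with no block boundary. -/
lemma run_incr {k n : ℕ} (p : Equiv.Perm (Fin n)) (hd : DescentType k p)
    (a c : ℕ) (hac : a < c) (hc : c < n)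
    (hmod : ∀ t, a ≤ t → t < c → (t + 1) % k ≠ 0) :
    p ⟨a, by omega⟩ < p ⟨c, hc⟩ := by
  induction c with
  | zero => omega
  | succ c ih =>
    have hstep := hd c (by omega)
    rw [if_neg (hmod c (by omega) (by omega))] at hstep
    rcases Nat.lt_or_ge a c with h | h
    · exact lt_trans (ih h (by omega) (fun t ht1 ht2 => hmod t ht1 (by omega))) hstep
    · have : a = c := by omega
      subst this; exact hstep

theorem stmt14 (b k x m : ℕ) (hk : b - 1 ≤ k) (hx1 : b - 1 ≤ x) (hx2 : x ≤ k) (hm : 1 ≤ m)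
    (p : Equiv.Perm (Fin (k * m + x)))
    (hd : DescentType k p) (ha : ¬ ContainsPat p (qpat b)) :
    ∀ i : Fin (k * m + x), i.val = k * m + x - 1 → (p i).val = k * m + x - 1 := by
  intro i hi
  have hn1 : 1 ≤ k * m + x := by have := i.isLt; omega
  rcases Nat.lt_or_ge b 2 with hb | hb
  · exfalso
    apply ha
    interval_cases b
    · exact ⟨Fin.elim0, fun a => a.elim0, fun a => a.elim0⟩
    · refine ⟨fun _ => i, fun a c hac => absurd hac (by omega), fun a c => ?_⟩
      have ha0 : a = 0 := Subsingleton.elim _ _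
      have hc0 : c = 0 := Subsingleton.elim _ _
      subst ha0; subst hc0; simp
  have hk1 : 1 ≤ k := by omega
  by_contra hne
  obtain ⟨j, hpj⟩ : ∃ j : Fin (k * m + x), (p j).val = k * m + x - 1 :=
    ⟨p.symm ⟨k * m + x - 1, by omega⟩, by rw [p.apply_symm_apply]⟩
  have hmax : ∀ y : Fin (k * m + x), (p y).val ≤ k * m + x - 1 := by
    intro y; have := (p y).isLt; omega
  have hji : j ≠ i := by
    intro h; apply hne; rw [← h]; exact hpj
  have hjlt : j.val < k * m + x - 1 := by
    have h1 := j.isLt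
    have h2 : j.val ≠ k * m + x - 1 := fun h => hji (Fin.ext (h.trans hi.symm))
    omega
  have hbound : (j.val + 1) % k = 0 := by
    by_contra hmod
    have hstep := hd j.val (by omega)
    rw [if_neg hmod] at hstep
    have hje : (⟨j.val, by omega⟩ : Fin (k * m + x)) = j := Fin.ext rfl
    rw [hje] at hstep
    have h1 := Fin.lt_def.mp hstep
    have h2 := hmax ⟨j.val + 1, by omega⟩
    omega
  have hroom : j.val + (b - 1) < k * m + x := by
    obtain ⟨t, ht⟩ := Nat.dvd_of_mod_eq_zero hbound
    have h2 : k * t < k * (m + 1) := by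
      have hkm : k * (m + 1) = k * m + k := by ring
      omega
    have htm : t ≤ m := by have := Nat.lt_of_mul_lt_mul_left h2; omega
    have h3 : k * t ≤ k * m := Nat.mul_le_mul_left k htm
    omega
  have hFlt : ∀ r : Fin b, j.val + r.val < k * m + x := by
    intro r; have := r.isLt; omega
  have hrun : ∀ r s : Fin b, 1 ≤ r.val → r.val < s.val →
      (p ⟨j.val + r.val, hFlt r⟩).val < (p ⟨j.val + s.val, hFlt s⟩).val := by
    intro r s hr hrs
    have hsb := s.isLt
    have := run_incr p hd (j.val + r.val) (j.val + s.val) (by omega) (hFlt s) ?_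
    · exact Fin.lt_def.mp this
    · intro t ht1 ht2
      have heq : (t + 1) % k = (t - j.val) % k := by
        obtain ⟨u, rfl⟩ : ∃ u, t = j.val + u := ⟨t - j.val, by omega⟩
        have h4 : j.val + u + 1 = (j.val + 1) + u := by ring
        have h5 : j.val + u - j.val = u := by omega
        rw [h4, Nat.add_mod, hbound, h5, Nat.zero_add, Nat.mod_mod_of_dvd u (dvd_refl k)]
      have h6 : (t - j.val) % k = t - j.val := Nat.mod_eq_of_lt (by omega)
      rw [heq, h6]
      omega
  have hlt : ∀ r : Fin b, 1 ≤ r.val →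
      (p ⟨j.val + r.val, hFlt r⟩).val < k * m + x - 1 := by
    intro r hr1
    have hne' : (⟨j.val + r.val, hFlt r⟩ : Fin (k * m + x)) ≠ j := by
      intro h
      have h' : j.val + r.val = j.val := congrArg Fin.val h
      omega
    have hne'' : p ⟨j.val + r.val, hFlt r⟩ ≠ p j := fun h => hne' (p.injective h)
    have h1 := hmax ⟨j.val + r.val, hFlt r⟩
    have h2 : (p ⟨j.val + r.val, hFlt r⟩).val ≠ (p j).val :=
      fun h => hne'' (Fin.ext h)
    omega
  have hj0 : ∀ r : Fin b, r.val = 0 →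
      (p ⟨j.val + r.val, hFlt r⟩).val = k * m + x - 1 := by
    intro r hr
    have he : (⟨j.val + r.val, hFlt r⟩ : Fin (k * m + x)) = j :=
      Fin.ext (show j.val + r.val = j.val by omega)
    rw [he]; exact hpj
  apply ha
  refine ⟨fun r => ⟨j.val + r.val, hFlt r⟩, ?_, ?_⟩
  · intro a c hac
    simp only [Fin.lt_def] at hac ⊢
    omega
  · intro a c
    simp only [Fin.lt_def, qpat_val hb]
    have haL := a.isLt
    have hcL := c.isLt
    rcases Nat.eq_zero_or_pos a.val with ha0 | ha0 <;>
      rcases Nat.eq_zero_or_pos c.val with hc0 | hc0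
    · rw [if_pos ha0, if_pos hc0, hj0 a ha0, hj0 c hc0]
      omega
    · rw [if_pos ha0, if_neg (by omega), hj0 a ha0]
      have := hlt c hc0
      constructor <;> intro h <;> omega
    · rw [if_neg (by omega), if_pos hc0, hj0 c hc0]
      have := hlt a ha0
      constructor <;> intro h <;> omega
    · rw [if_neg (by omega), if_neg (by omega)]
      constructor <;> intro h
      · exact hrun a c ha0 (by omega)
      · by_contra hcon
        rcases Nat.lt_or_ge c.val a.val with h1 | h1
        · have := hrun c a hc0 h1; omega
        · have : a.val = c.val := by omega
          have he : a = c := Fin.ext this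
          rw [he] at h; omega
end

section
/- For all even n ≥ 2, the number of alternating permutations of length n avoiding 12q equals the number avoiding 21q, for any permutation q of {3, 4, ..., t} with t > 2; in the special case t = 4 and q = 34 (readable concretely): |A_n(1234)| = |A_n(2134)| for all even n. -/
/-!
Write `p₁ = 12 ⊕ q` and `p₂ = 21 ⊕ q`. For a permutation `w`, the cells having an occurrence of
`q` strictly to their north-east form a board closed under moving south-west; call the points of
`w` on the board white and the others gray. Then `w` avoids `p₁` iff its white points decrease,
and `w` avoids `p₂` iff no two white points form a `21` whose corner lies on the board. In an
alternating `w` either condition puts all white points in valleys.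

Replacing the white values by any other transversal of the board (on the white rows and columns)
changes neither the board, since every cell of it is witnessed by gray points, nor alternation,
since a board cell lies below the neighbouring gray peaks. Among these transversals there is
exactly one decreasing one and exactly one greedy one, so the avoiders of `p₁` and of `p₂` are
both in bijection with the possible skeletons: board plus gray points.
-/

open Finset Set Function

section Transversal

variable {α β : Type*} {Y : α → β → Prop} {R s : Finset α} {C : Finset β} {σ τ T : α → β}
  {a b : α} {c : β}

def IsTransversal (Y : α → β → Prop) (R : Finset α) (C : Finset β) (σ : α → β) : Prop :=
  BijOn σ R C ∧ ∀ r ∈ R, Y r (σ r)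

namespace IsTransversal

theorem comp_swap [DecidableEq α] (h : IsTransversal Y R C σ) (ha : a ∈ R) (hb : b ∈ R)
    (hab : Y a (σ b)) (hba : Y b (σ a)) : IsTransversal Y R C (σ ∘ Equiv.swap a b) := by
  refine ⟨h.1.comp (Equiv.bijOn_swap ha hb), fun r hr => ?_⟩
  rcases eq_or_ne r a with rfl | hra
  · simpa using hab
  rcases eq_or_ne r b with rfl | hrb
  · simpa using hba
  simpa [Equiv.swap_apply_of_ne_of_ne hra hrb] using h.2 r hr

theorem erase [DecidableEq α] [DecidableEq β] (h : IsTransversal Y R C σ) (ha : a ∈ R) :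
    IsTransversal Y (R.erase a) (C.erase (σ a)) σ :=
  ⟨by simpa only [coe_erase] using h.1.sdiff_singleton ha,
    fun r hr => h.2 r (mem_of_mem_erase hr)⟩

theorem update [DecidableEq α] [DecidableEq β] (h : IsTransversal Y s (C.erase c) σ)
    (ha : a ∉ s) (hc : c ∈ C) (hac : Y a c) :
    IsTransversal Y (insert a s) C (Function.update σ a c) := by
  have hEq : EqOn σ (Function.update σ a c) s := fun x hx =>
    (Function.update_of_ne (ne_of_mem_of_not_mem hx ha) _ _).symm
  refine ⟨?_, fun r hr => ?_⟩
  · have := (h.1.congr hEq).insert (a := a) (by simp)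
    rwa [Function.update_self, ← coe_insert, ← coe_insert, insert_erase hc] at this
  · rcases mem_insert.mp hr with rfl | hr
    · simpa using hac
    · rw [← hEq hr]; exact h.2 r hr

end IsTransversal

theorem eqOn_insert_of_bijOn [DecidableEq α] {C : Set β} {σ₁ σ₂ : α → β} (ha : a ∉ s)
    (h₁ : BijOn σ₁ (insert a s : Finset α) C) (h₂ : BijOn σ₂ (insert a s : Finset α) C)
    (heq : σ₁ a = σ₂ a)
    (ih : ∀ C' : Set β, BijOn σ₁ s C' → BijOn σ₂ s C' → EqOn σ₁ σ₂ s) :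
    EqOn σ₁ σ₂ (insert a s : Finset α) := by
  have hs : ((insert a s : Finset α) : Set α) \ {a} = s := by simp [ha]
  have h₁' := h₁.sdiff_singleton (mem_insert_self a s)
  have h₂' := h₂.sdiff_singleton (mem_insert_self a s)
  rw [hs] at h₁' h₂'
  rw [heq] at h₁'
  rw [coe_insert, Set.insert_eq]
  exact (eqOn_singleton.mpr heq).union (ih _ h₁' h₂')

variable [LinearOrder α] [LinearOrder β]

/-- No pair `r₁ < r₂` is an inversion of `σ` whose corner `(r₂, σ r₁)` lies on the board `Y`. -/
def IsGreedyOn (Y : α → β → Prop) (σ : α → β) (R : Finset α) : Prop :=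
  ∀ r₁ ∈ R, ∀ r₂ ∈ R, r₁ < r₂ → Y r₂ (σ r₁) → σ r₁ < σ r₂

theorem IsGreedyOn.congr (h : IsGreedyOn Y σ R) (hστ : EqOn σ τ R) : IsGreedyOn Y τ R := by
  intro r₁ h₁ r₂ h₂ hlt hY
  rw [← hστ h₁, ← hστ h₂] at *
  exact h r₁ h₁ r₂ h₂ hlt hY

theorem IsTransversal.exists_of_insert (hT : IsTransversal Y (insert a s) C T) (ha : a ∉ s)
    (hb : b ∈ insert a s) (hab : Y a (T b)) (hba : Y b (T a)) :
    ∃ T', IsTransversal Y s (C.erase (T b)) T' := by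
  have := (hT.comp_swap (mem_insert_self a s) hb hab hba).erase (mem_insert_self a s)
  rw [erase_insert ha] at this
  exact ⟨_, by simpa using this⟩

theorem IsTransversal.exists_strictAntiOn
    (hY : ∀ ⦃x y x' y'⦄, Y x y → x' ≤ x → y' ≤ y → Y x' y') (hT : IsTransversal Y R C T) :
    ∃ σ, IsTransversal Y R C σ ∧ StrictAntiOn σ R := by
  induction R using Finset.induction_on_max generalizing C T with
  | empty => exact ⟨T, hT, by simp [StrictAntiOn]⟩
  | insert a s has ih =>
    have ha : a ∉ s := fun h => (has a h).false
    have haR := mem_insert_self a s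
    have hC : C.Nonempty := ⟨T a, hT.1.mapsTo haR⟩
    -- the last row takes the lowest column, which it reaches since the board is closed downwards
    set c := C.min' hC
    obtain ⟨b, hb, hbc⟩ := hT.1.surjOn (C.min'_mem hC)
    have hTa := hT.2 a haR
    have hca : Y a c := hY hTa le_rfl (C.min'_le _ (hT.1.mapsTo haR))
    have hba : b ≤ a := by rcases mem_insert.mp hb with rfl | hb <;> [rfl; exact (has b hb).le]
    obtain ⟨T', hT'⟩ := hT.exists_of_insert ha hb (hbc ▸ hca) (hY hTa hba le_rfl)
    rw [hbc] at hT'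
    obtain ⟨σ, hσ, hanti⟩ := ih hT'
    have hEq : ∀ x ∈ s, Function.update σ a c x = σ x := fun x hx =>
      Function.update_of_ne (ne_of_mem_of_not_mem hx ha) _ _
    refine ⟨Function.update σ a c, hσ.update ha (C.min'_mem hC) hca, ?_⟩
    rw [coe_insert, strictAntiOn_insert_iff_of_forall_le fun x hx => (has x hx).le]
    refine ⟨fun x hx _ => ?_, hanti.congr fun x hx => (hEq x hx).symm⟩
    rw [Function.update_self, hEq x hx]
    have hσx := mem_erase.mp (hσ.1.mapsTo hx)
    exact lt_of_le_of_ne (C.min'_le _ hσx.2) (Ne.symm hσx.1)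

theorem IsTransversal.exists_isGreedyOn
    (hY : ∀ ⦃x y x' y'⦄, Y x y → x' ≤ x → y' ≤ y → Y x' y') (hT : IsTransversal Y R C T) :
    ∃ σ, IsTransversal Y R C σ ∧ IsGreedyOn Y σ R := by
  classical
  induction R using Finset.induction_on_max generalizing C T with
  | empty => exact ⟨T, hT, by simp [IsGreedyOn]⟩
  | insert a s has ih =>
    have ha : a ∉ s := fun h => (has a h).false
    have haR := mem_insert_self a s
    have hTa := hT.2 a haR
    have hD : (C.filter (Y a)).Nonempty := ⟨T a, mem_filter.mpr ⟨hT.1.mapsTo haR, hTa⟩⟩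
    -- the last row takes the highest column it reaches on the board
    set c := (C.filter (Y a)).max' hD
    have hcC : c ∈ C ∧ Y a c := mem_filter.mp ((C.filter (Y a)).max'_mem hD)
    have hcmax : ∀ y ∈ C, Y a y → y ≤ c := fun y hy hay => le_max' _ y (mem_filter.mpr ⟨hy, hay⟩)
    obtain ⟨b, hb, hbc⟩ := hT.1.surjOn hcC.1
    obtain ⟨T', hT'⟩ := hT.exists_of_insert ha hb (hbc ▸ hcC.2)
      (hY (hT.2 b hb) le_rfl (hbc ▸ hcmax _ (hT.1.mapsTo haR) hTa))
    rw [hbc] at hT'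
    obtain ⟨σ, hσ, hgreedy⟩ := ih hT'
    have hEq : ∀ x ∈ s, Function.update σ a c x = σ x := fun x hx =>
      Function.update_of_ne (ne_of_mem_of_not_mem hx ha) _ _
    refine ⟨Function.update σ a c, hσ.update ha hcC.1 hcC.2, ?_⟩
    intro r₁ h₁ r₂ h₂ hlt hYr
    have h₁s : r₁ ∈ s := by
      rcases mem_insert.mp h₁ with rfl | h₁
      · rcases mem_insert.mp h₂ with rfl | h₂
        exacts [(lt_irrefl _ hlt).elim, ((has r₂ h₂).trans hlt |>.false).elim]
      · exact h₁
    rw [hEq r₁ h₁s] at hYr ⊢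
    have hσ₁ := mem_erase.mp (hσ.1.mapsTo h₁s)
    rcases mem_insert.mp h₂ with rfl | h₂
    · rw [Function.update_self]
      exact lt_of_le_of_ne (hcmax _ hσ₁.2 hYr) hσ₁.1
    · rw [hEq r₂ h₂]
      exact hgreedy r₁ h₁s r₂ h₂ hlt hYr

theorem Set.BijOn.apply_le_of_strictAntiOn {C : Set β} {σ₁ σ₂ : α → β} (h₁ : BijOn σ₁ R C)
    (h₂ : BijOn σ₂ R C) (hσ₂ : StrictAntiOn σ₂ R) (ha : a ∈ R) (hmax : ∀ x ∈ R, x ≤ a) :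
    σ₂ a ≤ σ₁ a := by
  obtain ⟨x, hx, hxa⟩ := h₂.surjOn (h₁.mapsTo ha)
  rw [← hxa]
  exact hσ₂.antitoneOn hx ha (hmax x hx)

theorem Set.BijOn.apply_le_of_isGreedyOn {C : Set β} {σ₁ σ₂ : α → β} (h₁ : BijOn σ₁ R C)
    (h₂ : BijOn σ₂ R C) (hσ₂ : IsGreedyOn Y σ₂ R) (ha : a ∈ R) (hmax : ∀ x ∈ R, x ≤ a)
    (hY : Y a (σ₁ a)) : σ₁ a ≤ σ₂ a := by
  obtain ⟨x, hx, hxa⟩ := h₂.surjOn (h₁.mapsTo ha)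
  rw [← hxa] at hY ⊢
  rcases (hmax x hx).lt_or_eq with hlt | rfl
  · exact (hσ₂ x hx a ha hlt hY).le
  · exact le_rfl

theorem Finset.eqOn_of_bijOn_of_strictAntiOn {C : Set β} {σ₁ σ₂ : α → β} (h₁ : BijOn σ₁ R C)
    (h₂ : BijOn σ₂ R C) (hσ₁ : StrictAntiOn σ₁ R) (hσ₂ : StrictAntiOn σ₂ R) :
    EqOn σ₁ σ₂ R := by
  induction R using Finset.induction_on_max generalizing C with
  | empty => simp
  | insert a s has ih =>
    have hmax : ∀ x ∈ insert a s, x ≤ a := fun x hx => by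
      rcases mem_insert.mp hx with rfl | hx <;> [rfl; exact (has x hx).le]
    exact eqOn_insert_of_bijOn (fun h => (has a h).false) h₁ h₂
      (le_antisymm (h₂.apply_le_of_strictAntiOn h₁ hσ₁ (mem_insert_self a s) hmax)
        (h₁.apply_le_of_strictAntiOn h₂ hσ₂ (mem_insert_self a s) hmax))
      fun C' h₁' h₂' => ih h₁' h₂' (hσ₁.mono (by simp)) (hσ₂.mono (by simp))

theorem Finset.eqOn_of_bijOn_of_isGreedyOn {C : Set β} {σ₁ σ₂ : α → β} (h₁ : BijOn σ₁ R C)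
    (h₂ : BijOn σ₂ R C) (hY₁ : ∀ r ∈ R, Y r (σ₁ r)) (hY₂ : ∀ r ∈ R, Y r (σ₂ r))
    (hσ₁ : IsGreedyOn Y σ₁ R) (hσ₂ : IsGreedyOn Y σ₂ R) : EqOn σ₁ σ₂ R := by
  induction R using Finset.induction_on_max generalizing C with
  | empty => simp
  | insert a s has ih =>
    have haR := mem_insert_self a s
    have hmax : ∀ x ∈ insert a s, x ≤ a := fun x hx => by
      rcases mem_insert.mp hx with rfl | hx <;> [rfl; exact (has x hx).le]
    have hsub : s ⊆ insert a s := subset_insert a s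
    exact eqOn_insert_of_bijOn (fun h => (has a h).false) h₁ h₂
      (le_antisymm (h₁.apply_le_of_isGreedyOn h₂ hσ₂ haR hmax (hY₁ a haR))
        (h₂.apply_le_of_isGreedyOn h₁ hσ₁ haR hmax (hY₂ a haR)))
      fun C' h₁' h₂' => ih h₁' h₂' (fun r hr => hY₁ r (hsub hr))
        (fun r hr => hY₂ r (hsub hr)) (fun r₁ h₁ r₂ h₂ => hσ₁ r₁ (hsub h₁) r₂ (hsub h₂))
        (fun r₁ h₁ r₂ h₂ => hσ₂ r₁ (hsub h₁) r₂ (hsub h₂))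

end Transversal

namespace AlternatingAvoidance

variable {n t : ℕ} {w w' w₁ w₂ : Equiv.Perm (Fin n)} {p p₁ p₂ : Equiv.Perm (Fin t)}
  {x x' y y' i j k : Fin n}

theorem isAlternating_iff : IsAlternating w ↔
    ∀ e o : Fin n, e.val % 2 = 0 → (e.val + 1 = o.val ∨ o.val + 1 = e.val) → w e < w o := by
  constructor
  · rintro hw e o he (h | h)
    · have := hw e.val (by omega)
      rwa [if_pos he, show (⟨e.val + 1, _⟩ : Fin n) = o from Fin.ext h] at this
    · have := hw o.val (by omega)
      rwa [if_neg (by omega), show (⟨o.val + 1, _⟩ : Fin n) = e from Fin.ext h] at this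
  · intro hw i hi
    split_ifs with he
    · exact hw _ _ he (Or.inl rfl)
    · exact hw _ _ (by simp; omega) (Or.inr rfl)

def IsTailEmbedding (w : Equiv.Perm (Fin n)) (p : Equiv.Perm (Fin t)) (f : Fin t → Fin n) :
    Prop :=
  ∀ i j : Fin t, 2 ≤ i.val → 2 ≤ j.val → (i < j → f i < f j) ∧ (p i < p j ↔ w (f i) < w (f j))

/-- The cell `(x, y)` lies on the board of `w`: the pattern `q` formed by the entries of `p` at
positions `≥ 2` occurs in `w` strictly north-east of it. -/
def TailAbove (w : Equiv.Perm (Fin n)) (p : Equiv.Perm (Fin t)) (x y : Fin n) : Prop :=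
  ∃ f, IsTailEmbedding w p f ∧ ∀ i : Fin t, 2 ≤ i.val → x < f i ∧ y < w (f i)

open Classical in
/-- The points of `w` on the board; the remaining points are called gray. -/
noncomputable def whites (w : Equiv.Perm (Fin n)) (p : Equiv.Perm (Fin t)) : Finset (Fin n) :=
  Finset.univ.filter fun i => TailAbove w p i (w i)

theorem mem_whites : i ∈ whites w p ↔ TailAbove w p i (w i) := by
  classical
  simp [whites]

theorem tailAbove_congr (h : ∀ i : Fin t, 2 ≤ i.val → p₁ i = p₂ i) :
    TailAbove w p₁ = TailAbove w p₂ := by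
  have : IsTailEmbedding w p₁ = IsTailEmbedding w p₂ := by
    ext f
    exact forall₄_congr fun i j hi hj => by rw [h i hi, h j hj]
  unfold TailAbove
  rw [this]

theorem whites_congr (h : ∀ i : Fin t, 2 ≤ i.val → p₁ i = p₂ i) : whites w p₁ = whites w p₂ := by
  ext i
  rw [mem_whites, mem_whites, tailAbove_congr h]

namespace TailAbove

theorem mono (h : TailAbove w p x y) (hx : x' ≤ x) (hy : y' ≤ y) : TailAbove w p x' y' :=
  let ⟨f, hf, hxy⟩ := h
  ⟨f, hf, fun i hi => ⟨hx.trans_lt (hxy i hi).1, hy.trans_lt (hxy i hi).2⟩⟩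

theorem val_add_one_lt (ht : 2 < t) (h : TailAbove w p x y) : x.val + 1 < n := by
  obtain ⟨f, -, hxy⟩ := h
  have := (hxy ⟨2, ht⟩ le_rfl).1
  have := (f ⟨2, ht⟩).isLt
  rw [Fin.lt_def] at *
  omega

theorem of_succ (h : TailAbove w p x y) (hxk : x.val + 1 = k.val) (hk : w k ≤ y) :
    TailAbove w p k y := by
  obtain ⟨f, hf, hxy⟩ := h
  refine ⟨f, hf, fun i hi => ⟨?_, (hxy i hi).2⟩⟩
  have hne : f i ≠ k := fun h => (hk.trans_lt (h ▸ (hxy i hi).2)).false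
  have := (hxy i hi).1
  rw [Fin.lt_def] at *
  have := Fin.val_ne_of_ne hne
  omega

/-- Points of the occurrence that are themselves white can be replaced by an occurrence
further to the north-east, so some occurrence avoids the white points. -/
theorem exists_gray (h : TailAbove w p x y) :
    ∃ f, IsTailEmbedding w p f ∧
      ∀ i : Fin t, 2 ≤ i.val → x < f i ∧ y < w (f i) ∧ f i ∉ whites w p := by
  induction x using WellFoundedGT.induction generalizing y with
  | _ x ih =>
  obtain ⟨f, hf, hxy⟩ := h
  by_cases hgray : ∀ i : Fin t, 2 ≤ i.val → f i ∉ whites w p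
  · exact ⟨f, hf, fun i hi => ⟨(hxy i hi).1, (hxy i hi).2, hgray i hi⟩⟩
  push Not at hgray
  obtain ⟨i, hi, hwhite⟩ := hgray
  obtain ⟨g, hg, hgxy⟩ := ih (f i) (hxy i hi).1 (mem_whites.mp hwhite)
  exact ⟨g, hg, fun j hj => ⟨(hxy i hi).1.trans (hgxy j hj).1,
    (hxy i hi).2.trans (hgxy j hj).2.1, (hgxy j hj).2.2⟩⟩

theorem of_eq_of_notMem_whites (h : TailAbove w p x y) (hw' : ∀ i ∉ whites w p, w' i = w i) :
    TailAbove w' p x y := by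
  obtain ⟨f, hf, hgray⟩ := h.exists_gray
  have hfw : ∀ i : Fin t, 2 ≤ i.val → w' (f i) = w (f i) := fun i hi => hw' _ (hgray i hi).2.2
  refine ⟨f, fun i j hi hj => ?_, fun i hi => ?_⟩
  · rw [hfw i hi, hfw j hj]
    exact hf i j hi hj
  · rw [hfw i hi]
    exact ⟨(hgray i hi).1, (hgray i hi).2.1⟩

end TailAbove

theorem lt_apply_of_tailAbove (hk : k ∉ whites w p) (hadj : k.val + 1 = j.val ∨ j.val + 1 = k.val)
    {c : Fin n} (h : TailAbove w p j c) : c < w k := by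
  by_contra! hkc
  refine hk (mem_whites.mpr ?_)
  rcases hadj with hadj | hadj
  · exact h.mono (Fin.le_def.mpr (by omega)) hkc
  · exact (h.of_succ hadj hkc).mono le_rfl hkc

theorem two_le_apply (ht : 1 < t) (h₀ : (p ⟨0, zero_lt_one.trans ht⟩).val < 2)
    (h₁ : (p ⟨1, ht⟩).val < 2) {a : Fin t} (ha : 2 ≤ a.val) : 2 ≤ (p a).val := by
  have hne : ∀ b c : Fin t, b.val ≠ c.val → (p b).val ≠ (p c).val := fun b c hbc h =>
    hbc (congrArg Fin.val (p.injective (Fin.ext h)))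
  have := hne ⟨0, zero_lt_one.trans ht⟩ ⟨1, ht⟩ (by simp)
  have := hne a ⟨0, zero_lt_one.trans ht⟩ (by simp; omega)
  have := hne a ⟨1, ht⟩ (by simp; omega)
  omega

theorem exists_pair_of_containsPat (ht : 1 < t) (h₀ : (p ⟨0, zero_lt_one.trans ht⟩).val < 2)
    (h₁ : (p ⟨1, ht⟩).val < 2) (h : ContainsPat w p) :
    ∃ i j : Fin n, i < j ∧ (w i < w j ↔ p ⟨0, zero_lt_one.trans ht⟩ < p ⟨1, ht⟩) ∧
      TailAbove w p j (max (w i) (w j)) := by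
  obtain ⟨f, hf, hiff⟩ := h
  set a₀ : Fin t := ⟨0, zero_lt_one.trans ht⟩
  set a₁ : Fin t := ⟨1, ht⟩
  have hlow : ∀ a b : Fin t, a.val < 2 → 2 ≤ b.val → w (f a) < w (f b) := fun a b ha hb =>
    (hiff a b).mp (Fin.lt_def.mpr (by
      have := two_le_apply ht h₀ h₁ hb
      obtain rfl | rfl : a = a₀ ∨ a = a₁ := by simp only [Fin.ext_iff, a₀, a₁]; omega
      all_goals omega))
  refine ⟨f a₀, f a₁, hf (Fin.lt_def.mpr (by simp [a₀, a₁])), (hiff a₀ a₁).symm, f,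
    fun i j _ _ => ⟨fun h => hf h, hiff i j⟩, fun i hi =>
      ⟨hf (Fin.lt_def.mpr (by simp [a₁]; omega)), max_lt (hlow a₀ i (by simp [a₀]) hi)
        (hlow a₁ i (by simp [a₁]) hi)⟩⟩

theorem containsPat_of_pair (ht : 1 < t) (h₀ : (p ⟨0, zero_lt_one.trans ht⟩).val < 2)
    (h₁ : (p ⟨1, ht⟩).val < 2) {i j : Fin n} (hij : i < j)
    (hiff : w i < w j ↔ p ⟨0, zero_lt_one.trans ht⟩ < p ⟨1, ht⟩)
    (h : TailAbove w p j (max (w i) (w j))) : ContainsPat w p := by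
  obtain ⟨f, hf, hfxy⟩ := h
  set a₀ : Fin t := ⟨0, zero_lt_one.trans ht⟩
  set a₁ : Fin t := ⟨1, ht⟩
  have hlow : ∀ a : Fin t, a.val < 2 → a = a₀ ∨ a = a₁ := fun a ha => by
    simp only [Fin.ext_iff, a₀, a₁]; omega
  set F : Fin t → Fin n := fun a => if a.val = 0 then i else if a.val = 1 then j else f a
  have hF₀ : F a₀ = i := by simp [F, a₀]
  have hF₁ : F a₁ = j := by simp [F, a₁]
  have hF : ∀ a : Fin t, 2 ≤ a.val → F a = f a := fun a ha => by
    simp only [F]; rw [if_neg (by omega), if_neg (by omega)]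
  have hmixed : ∀ a b : Fin t, a.val < 2 → 2 ≤ b.val →
      F a < F b ∧ p a < p b ∧ w (F a) < w (F b) := by
    intro a b ha hb
    have := two_le_apply ht h₀ h₁ hb
    rw [hF b hb]
    rcases hlow a ha with rfl | rfl
    · rw [hF₀]
      exact ⟨hij.trans (hfxy b hb).1, Fin.lt_def.mpr (by omega),
        (le_max_left _ _).trans_lt (hfxy b hb).2⟩
    · rw [hF₁]
      exact ⟨(hfxy b hb).1, Fin.lt_def.mpr (by omega), (le_max_right _ _).trans_lt (hfxy b hb).2⟩
  refine ⟨F, fun a b hab => ?_, fun a b => ?_⟩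
  · rcases lt_or_ge b.val 2 with hb | hb
    · obtain rfl : a = a₀ := Fin.ext (by have := Fin.lt_def.mp hab; simp [a₀]; omega)
      obtain rfl : b = a₁ := Fin.ext (by have := Fin.lt_def.mp hab; simp [a₁]; omega)
      rwa [hF₀, hF₁]
    rcases lt_or_ge a.val 2 with ha | ha
    · exact (hmixed a b ha hb).1
    · rw [hF a ha, hF b hb]
      exact (hf a b ha hb).1 hab
  rcases lt_or_ge a.val 2 with ha | ha <;> rcases lt_or_ge b.val 2 with hb | hb
  · have hp : p a₀ ≠ p a₁ := p.injective.ne (by simp [a₀, a₁, Fin.ext_iff])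
    have hw : w i ≠ w j := w.injective.ne hij.ne
    rcases hlow a ha with rfl | rfl <;> rcases hlow b hb with rfl | rfl
    · simp
    · rw [hF₀, hF₁]; exact hiff.symm
    · rw [hF₀, hF₁, ← hp.symm.le_iff_lt, ← hw.symm.le_iff_lt, ← not_lt, ← not_lt, hiff]
    · simp
  · exact iff_of_true (hmixed a b ha hb).2.1 (hmixed a b ha hb).2.2
  · exact iff_of_false (hmixed b a hb ha).2.1.asymm (hmixed b a hb ha).2.2.asymm
  · rw [hF a ha, hF b hb]
    exact (hf a b ha hb).2

/-- For `p = ab ⊕ q` with `ab ∈ {12, 21}`, an occurrence of `p` is a pair `i < j` ordered like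
`ab`, together with an occurrence of `q` to the north-east of both points. -/
theorem containsPat_iff (ht : 1 < t) (h₀ : (p ⟨0, zero_lt_one.trans ht⟩).val < 2)
    (h₁ : (p ⟨1, ht⟩).val < 2) :
    ContainsPat w p ↔ ∃ i j : Fin n, i < j ∧
      (w i < w j ↔ p ⟨0, zero_lt_one.trans ht⟩ < p ⟨1, ht⟩) ∧
      TailAbove w p j (max (w i) (w j)) :=
  ⟨exists_pair_of_containsPat ht h₀ h₁, fun ⟨_, _, hij, hiff, h⟩ =>
    containsPat_of_pair ht h₀ h₁ hij hiff h⟩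

theorem containsPat_iff_not_strictAntiOn (ht : 1 < t) (h₀ : (p ⟨0, zero_lt_one.trans ht⟩).val = 0)
    (h₁ : (p ⟨1, ht⟩).val = 1) : ContainsPat w p ↔ ¬ StrictAntiOn w (whites w p) := by
  have hp : p ⟨0, zero_lt_one.trans ht⟩ < p ⟨1, ht⟩ := Fin.lt_def.mpr (by omega)
  rw [containsPat_iff ht (by omega) (by omega)]
  simp only [hp, iff_true]
  constructor
  · rintro ⟨i, j, hij, hw, hj⟩ hanti
    rw [max_eq_right hw.le] at hj
    exact (hanti (mem_whites.mpr (hj.mono hij.le hw.le)) (mem_whites.mpr hj) hij).asymm hw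
  · intro h
    simp only [StrictAntiOn, not_forall] at h
    obtain ⟨i, hi, j, hj, hij, hw⟩ := h
    have hw : w i < w j := lt_of_le_of_ne (not_lt.mp hw) (w.injective.ne hij.ne)
    exact ⟨i, j, hij, hw, by rw [max_eq_right hw.le]; exact mem_whites.mp hj⟩

theorem containsPat_iff_not_isGreedyOn (ht : 1 < t) (h₀ : (p ⟨0, zero_lt_one.trans ht⟩).val = 1)
    (h₁ : (p ⟨1, ht⟩).val = 0) :
    ContainsPat w p ↔ ¬ IsGreedyOn (TailAbove w p) w (whites w p) := by
  have hp : ¬ p ⟨0, zero_lt_one.trans ht⟩ < p ⟨1, ht⟩ := fun h => by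
    have := Fin.lt_def.mp h; omega
  rw [containsPat_iff ht (by omega) (by omega)]
  simp only [hp, iff_false, not_lt]
  constructor
  · rintro ⟨i, j, hij, hw, hj⟩ hgreedy
    rw [max_eq_left hw] at hj
    exact (hgreedy i (mem_whites.mpr (hj.mono hij.le le_rfl)) j (mem_whites.mpr (hj.mono le_rfl hw))
      hij hj).not_ge hw
  · intro h
    simp only [IsGreedyOn, not_forall, not_lt] at h
    obtain ⟨i, -, j, -, hij, hj, hw⟩ := h
    exact ⟨i, j, hij, hw, by rwa [max_eq_left hw]⟩

theorem even_of_mem_whites_of_strictAntiOn (hw : IsAlternating w)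
    (hanti : StrictAntiOn w (whites w p)) (hi : i ∈ whites w p) : i.val % 2 = 0 := by
  by_contra hodd
  set j : Fin n := ⟨i.val - 1, by omega⟩
  have hji : w j < w i := isAlternating_iff.mp hw j i (by simp [j]; omega) (by simp [j]; omega)
  have hj : j ∈ whites w p :=
    mem_whites.mpr ((mem_whites.mp hi).mono (Fin.le_def.mpr (by simp [j])) hji.le)
  exact (hanti hj hi (Fin.lt_def.mpr (by simp [j]; omega))).asymm hji

theorem even_of_mem_whites_of_isGreedyOn (ht : 2 < t) (hw : IsAlternating w)
    (hgreedy : IsGreedyOn (TailAbove w p) w (whites w p)) (hi : i ∈ whites w p) :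
    i.val % 2 = 0 := by
  by_contra hodd
  have hlt := (mem_whites.mp hi).val_add_one_lt ht
  set k : Fin n := ⟨i.val + 1, hlt⟩
  have hki : w k < w i := isAlternating_iff.mp hw k i (by simp [k]; omega) (by simp [k])
  have hY : TailAbove w p k (w i) := (mem_whites.mp hi).of_succ rfl hki.le
  have hk : k ∈ whites w p := mem_whites.mpr (hY.mono le_rfl hki.le)
  exact (hgreedy i hi k hk (Fin.lt_def.mpr (by simp [k])) hY).asymm hki

theorem isTransversal_whites (w : Equiv.Perm (Fin n)) (p : Equiv.Perm (Fin t)) :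
    IsTransversal (TailAbove w p) (whites w p) ((whites w p).image w) w :=
  ⟨by rw [Finset.coe_image]; exact w.injective.injOn.bijOn_image,
    fun _ hr => mem_whites.mp hr⟩

theorem image_whites_eq (h : ∀ i ∉ whites w₁ p, w₁ i = w₂ i) :
    (whites w₁ p).image w₁ = (whites w₁ p).image w₂ := by
  suffices ∀ v₁ v₂ : Equiv.Perm (Fin n), (∀ i ∉ whites w₁ p, v₁ i = v₂ i) →
      (whites w₁ p).image v₁ ⊆ (whites w₁ p).image v₂ from
    (this _ _ h).antisymm (this _ _ fun i hi => (h i hi).symm)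
  intro v₁ v₂ h y hy
  obtain ⟨x, hx, rfl⟩ := Finset.mem_image.mp hy
  refine Finset.mem_image.mpr ⟨v₂.symm (v₁ x), ?_, by simp⟩
  by_contra hx'
  have := h _ hx'
  rw [Equiv.apply_symm_apply, v₁.apply_eq_iff_eq] at this
  exact hx' (by rwa [this])

/-- What survives when the values at the white points are permuted: the board and the gray
points. -/
noncomputable def skeleton (w : Equiv.Perm (Fin n)) (p : Equiv.Perm (Fin t)) :
    (Fin n → Fin n → Prop) × (Fin n → Option (Fin n)) :=
  (TailAbove w p, fun i => if i ∈ whites w p then none else some (w i))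

theorem skeleton_eq_iff : skeleton w₁ p = skeleton w₂ p ↔ TailAbove w₁ p = TailAbove w₂ p ∧
    whites w₁ p = whites w₂ p ∧ ∀ i ∉ whites w₁ p, w₁ i = w₂ i := by
  simp only [skeleton, Prod.ext_iff, funext_iff (f := fun i => ite _ _ _)]
  refine and_congr_right fun _ => ⟨fun h => ?_, ?_⟩
  · have hW : whites w₁ p = whites w₂ p := by
      ext i
      have := h i
      split_ifs at this with h₁ h₂ h₂ <;> simp_all
    refine ⟨hW, fun i hi => ?_⟩
    have := h i
    rw [if_neg hi, if_neg (hW ▸ hi)] at this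
    exact Option.some_injective _ this
  · rintro ⟨hW, hw⟩ i
    rw [← hW]
    split_ifs with hi
    · rfl
    · rw [hw i hi]

theorem exists_eqOn_whites_of_isTransversal (hw : IsAlternating w)
    (heven : ∀ i ∈ whites w p, i.val % 2 = 0) {σ : Fin n → Fin n}
    (hσ : IsTransversal (TailAbove w p) (whites w p) ((whites w p).image w) σ) :
    ∃ w' : Equiv.Perm (Fin n), IsAlternating w' ∧ skeleton w' p = skeleton w p ∧
      EqOn w' σ (whites w p) := by
  classical
  set W := whites w p
  have hinj : Injective ((W : Set (Fin n)).piecewise σ w) := by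
    refine (Set.injective_piecewise_iff _).mpr
      ⟨hσ.1.injOn, w.injective.injOn, fun x hx y hy h => ?_⟩
    obtain ⟨z, hz, hzx⟩ := Finset.mem_image.mp (hσ.1.mapsTo hx)
    rw [← hzx, w.apply_eq_iff_eq] at h
    exact hy (h ▸ hz)
  set w' := Equiv.ofBijective _ (Finite.injective_iff_bijective.mp hinj)
  have hon : EqOn w' σ W := fun i hi => Set.piecewise_eq_of_mem _ _ _ hi
  have hoff : ∀ i ∉ W, w' i = w i := fun i hi => Set.piecewise_eq_of_notMem _ _ _ hi
  have hW : ∀ i ∈ W, TailAbove w' p i (w' i) := fun i hi => by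
    rw [hon hi]
    exact (hσ.2 i hi).of_eq_of_notMem_whites hoff
  have hY : TailAbove w' p = TailAbove w p := by
    ext x y
    refine ⟨fun h => h.of_eq_of_notMem_whites fun i hi => ?_,
      fun h => h.of_eq_of_notMem_whites hoff⟩
    have hiW : i ∉ W := fun h => hi (mem_whites.mpr (hW i h))
    exact (hoff i hiW).symm
  have hwhites : whites w' p = W := by
    ext i
    rw [mem_whites, hY]
    by_cases hi : i ∈ W
    · simpa [hi, hon hi] using hσ.2 i hi
    · rw [hoff i hi]
      exact iff_of_false (fun h => hi (mem_whites.mpr h)) hi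
  refine ⟨w', isAlternating_iff.mpr fun e o he hadj => ?_,
    skeleton_eq_iff.mpr ⟨hY, hwhites, fun i hi => hoff i (hwhites ▸ hi)⟩, hon⟩
  have ho : o ∉ W := fun h => by have := heven o h; omega
  rw [hoff o ho]
  by_cases heW : e ∈ W
  · rw [hon heW]
    exact lt_apply_of_tailAbove ho hadj.symm (hσ.2 e heW)
  · rw [hoff e heW]
    exact isAlternating_iff.mp hw e o he hadj

theorem exists_isGreedyOn_of_strictAntiOn (hw : IsAlternating w)
    (hanti : StrictAntiOn w (whites w p)) :
    ∃ w', (IsAlternating w' ∧ IsGreedyOn (TailAbove w' p) w' (whites w' p)) ∧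
      skeleton w' p = skeleton w p := by
  obtain ⟨σ, hσ, hgreedy⟩ :=
    (isTransversal_whites w p).exists_isGreedyOn fun _ _ _ _ => TailAbove.mono
  obtain ⟨w', halt, hsk, hon⟩ := exists_eqOn_whites_of_isTransversal hw
    (fun i hi => even_of_mem_whites_of_strictAntiOn hw hanti hi) hσ
  obtain ⟨hY, hW, -⟩ := skeleton_eq_iff.mp hsk
  refine ⟨w', ⟨halt, ?_⟩, hsk⟩
  rw [hY, hW]
  exact hgreedy.congr hon.symm

theorem exists_strictAntiOn_of_isGreedyOn (ht : 2 < t) (hw : IsAlternating w)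
    (hgreedy : IsGreedyOn (TailAbove w p) w (whites w p)) :
    ∃ w', (IsAlternating w' ∧ StrictAntiOn w' (whites w' p)) ∧
      skeleton w' p = skeleton w p := by
  obtain ⟨σ, hσ, hanti⟩ :=
    (isTransversal_whites w p).exists_strictAntiOn fun _ _ _ _ => TailAbove.mono
  obtain ⟨w', halt, hsk, hon⟩ := exists_eqOn_whites_of_isTransversal hw
    (fun i hi => even_of_mem_whites_of_isGreedyOn ht hw hgreedy hi) hσ
  obtain ⟨-, hW, -⟩ := skeleton_eq_iff.mp hsk
  refine ⟨w', ⟨halt, ?_⟩, hsk⟩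
  rw [hW]
  exact hanti.congr hon.symm

theorem eq_of_skeleton_eq_of_eqOn (hsk : skeleton w₁ p = skeleton w₂ p)
    (h : EqOn w₁ w₂ (whites w₁ p)) : w₁ = w₂ := by
  obtain ⟨-, -, hoff⟩ := skeleton_eq_iff.mp hsk
  ext1 i
  by_cases hi : i ∈ whites w₁ p
  exacts [h hi, hoff i hi]

theorem bijOn_whites_of_skeleton_eq (hsk : skeleton w₁ p = skeleton w₂ p) :
    BijOn w₂ (whites w₁ p) ((whites w₁ p).image w₁) := by
  obtain ⟨-, hW, hoff⟩ := skeleton_eq_iff.mp hsk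
  rw [image_whites_eq hoff, hW]
  exact (isTransversal_whites w₂ p).1

theorem eq_of_skeleton_eq_of_strictAntiOn (hsk : skeleton w₁ p = skeleton w₂ p)
    (h₁ : StrictAntiOn w₁ (whites w₁ p)) (h₂ : StrictAntiOn w₂ (whites w₂ p)) : w₁ = w₂ := by
  obtain ⟨-, hW, -⟩ := skeleton_eq_iff.mp hsk
  rw [← hW] at h₂
  exact eq_of_skeleton_eq_of_eqOn hsk <| Finset.eqOn_of_bijOn_of_strictAntiOn
    (isTransversal_whites w₁ p).1 (bijOn_whites_of_skeleton_eq hsk) h₁ h₂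

theorem eq_of_skeleton_eq_of_isGreedyOn (hsk : skeleton w₁ p = skeleton w₂ p)
    (h₁ : IsGreedyOn (TailAbove w₁ p) w₁ (whites w₁ p))
    (h₂ : IsGreedyOn (TailAbove w₂ p) w₂ (whites w₂ p)) : w₁ = w₂ := by
  obtain ⟨hY, hW, -⟩ := skeleton_eq_iff.mp hsk
  rw [← hW, ← hY] at h₂
  have hY₂ : ∀ r ∈ whites w₁ p, TailAbove w₁ p r (w₂ r) := fun r hr => by
    rw [hY]; rw [hW] at hr; exact mem_whites.mp hr
  exact eq_of_skeleton_eq_of_eqOn hsk <| Finset.eqOn_of_bijOn_of_isGreedyOn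
    (isTransversal_whites w₁ p).1 (bijOn_whites_of_skeleton_eq hsk)
    (isTransversal_whites w₁ p).2 hY₂ h₁ h₂

end AlternatingAvoidance

theorem Nat.card_eq_of_injOn_of_exists_eq {X K : Type*} {P Q : X → Prop} (κ : X → K)
    (hP : InjOn κ {x | P x}) (hQ : InjOn κ {x | Q x}) (hPQ : ∀ x, P x → ∃ y, Q y ∧ κ y = κ x)
    (hQP : ∀ y, Q y → ∃ x, P x ∧ κ x = κ y) : Nat.card {x // P x} = Nat.card {x // Q x} := by
  have himage : κ '' {x | P x} = κ '' {x | Q x} := by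
    ext k
    constructor
    · rintro ⟨x, hx, rfl⟩
      exact hPQ x hx
    · rintro ⟨y, hy, rfl⟩
      exact hQP y hy
  change Nat.card ({x | P x} : Set X) = Nat.card ({x | Q x} : Set X)
  rw [Nat.card_coe_set_eq, Nat.card_coe_set_eq, ← hP.ncard_image, ← hQ.ncard_image, himage]

open AlternatingAvoidance in
theorem card_alternating_avoiding_eq {t : ℕ} (ht : 2 < t) {p₁ p₂ : Equiv.Perm (Fin t)}
    (h₁₀ : (p₁ ⟨0, zero_lt_two.trans ht⟩).val = 0) (h₁₁ : (p₁ ⟨1, one_lt_two.trans ht⟩).val = 1)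
    (h₂₀ : (p₂ ⟨0, zero_lt_two.trans ht⟩).val = 1) (h₂₁ : (p₂ ⟨1, one_lt_two.trans ht⟩).val = 0)
    (hq : ∀ i : Fin t, 2 ≤ i.val → p₁ i = p₂ i) (n : ℕ) :
    Nat.card {w : Equiv.Perm (Fin n) // IsAlternating w ∧ ¬ ContainsPat w p₁} =
      Nat.card {w : Equiv.Perm (Fin n) // IsAlternating w ∧ ¬ ContainsPat w p₂} := by
  have hP (w : Equiv.Perm (Fin n)) : ¬ ContainsPat w p₁ ↔ StrictAntiOn w (whites w p₁) :=
    (containsPat_iff_not_strictAntiOn (one_lt_two.trans ht) h₁₀ h₁₁).not_left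
  have hQ (w : Equiv.Perm (Fin n)) :
      ¬ ContainsPat w p₂ ↔ IsGreedyOn (TailAbove w p₁) w (whites w p₁) := by
    rw [tailAbove_congr hq, whites_congr hq]
    exact (containsPat_iff_not_isGreedyOn (one_lt_two.trans ht) h₂₀ h₂₁).not_left
  simp_rw [hP, hQ]
  exact Nat.card_eq_of_injOn_of_exists_eq (skeleton · p₁)
    (fun _ h₁ _ h₂ hsk => eq_of_skeleton_eq_of_strictAntiOn hsk h₁.2 h₂.2)
    (fun _ h₁ _ h₂ hsk => eq_of_skeleton_eq_of_isGreedyOn hsk h₁.2 h₂.2)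
    (fun _ h => exists_isGreedyOn_of_strictAntiOn h.1 h.2)
    (fun _ h => exists_strictAntiOn_of_isGreedyOn ht h.1 h.2)

theorem stmt19 :
    (∀ (t : ℕ) (ht : 2 < t) (p1 p2 : Equiv.Perm (Fin t)),
      (p1 ⟨0, by omega⟩).val = 0 → (p1 ⟨1, by omega⟩).val = 1 →
      (p2 ⟨0, by omega⟩).val = 1 → (p2 ⟨1, by omega⟩).val = 0 →
      (∀ i : Fin t, 2 ≤ i.val → p1 i = p2 i) →
      ∀ n : ℕ, Even n → 2 ≤ n →
        Nat.card {w : Equiv.Perm (Fin n) // IsAlternating w ∧ ¬ ContainsPat w p1} =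
        Nat.card {w : Equiv.Perm (Fin n) // IsAlternating w ∧ ¬ ContainsPat w p2}) ∧
    (∀ n : ℕ, Even n → 2 ≤ n →
      Nat.card {w : Equiv.Perm (Fin n) //
        IsAlternating w ∧ ¬ ContainsPat w (Equiv.refl (Fin 4))} =
      Nat.card {w : Equiv.Perm (Fin n) //
        IsAlternating w ∧ ¬ ContainsPat w (Equiv.swap (0 : Fin 4) 1)}) := by
  exact ⟨fun _ ht _ _ h₁₀ h₁₁ h₂₀ h₂₁ hq n _ _ =>
      card_alternating_avoiding_eq ht h₁₀ h₁₁ h₂₀ h₂₁ hq n,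
    fun n _ _ => card_alternating_avoiding_eq (by norm_num) rfl rfl rfl rfl (by decide) n⟩
end
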